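/- arXiv:2601.11165 — 13 statements merged into one kernel-verified Lean document; each statement's English description precedes it below -/
import Mathlib

section
/- If T : C(X,ℂ) → C(Y,ℂ) is a surjective map between the Banach algebras of continuous complex-valued functions on compact Hausdorff spaces X and Y (with supremum norms) satisfying ‖T(f+g)‖ = ‖T(f)+T(g)‖ for all f, g, then T is additive: T(f+g) = T(f) + T(g) for all f, g ∈ C(X,ℂ). -/
/-!
Since `T 0 = 0` and `T (-x) = -T x`, the equation gives `‖T x - T y‖ = ‖T (x - y)‖`. Hence
`T x ↦ T (x + c)` is a well-defined surjective self-isometry of the target, so it is affine by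
the Mazur–Ulam theorem. For `c = -m` with `m + m = a + b` it sends `T m` to `0` and `T a`, `T b`
to opposite points, so `T m` is the midpoint of `T a` and `T b`. Applying this to the pairs
`(a, b)` and `(a + b, 0)` gives `T (a + b) = 2 • T m = T a + T b`.
-/

open Function

section

variable {G E : Type*} [AddCommGroup G] [NormedAddCommGroup E] [NormedSpace ℝ E] {T : G → E}

theorem map_zero_of_norm_map_add_eq (h : ∀ f g : G, ‖T (f + g)‖ = ‖T f + T g‖) : T 0 = 0 := by
  have h0 : ‖T 0‖ = 2 * ‖T 0‖ := by
    simpa [← two_smul ℝ (T 0), norm_smul] using h 0 0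
  exact norm_eq_zero.mp (by linarith)

theorem map_neg_of_norm_map_add_eq (h : ∀ f g : G, ‖T (f + g)‖ = ‖T f + T g‖) (x : G) :
    T (-x) = -T x := by
  have hsum : ‖T x + T (-x)‖ = 0 := by
    rw [← h, add_neg_cancel, map_zero_of_norm_map_add_eq h, norm_zero]
  exact eq_neg_of_add_eq_zero_right (norm_eq_zero.mp hsum)

theorem norm_map_sub_map_of_norm_map_add_eq (h : ∀ f g : G, ‖T (f + g)‖ = ‖T f + T g‖)
    (x y : G) : ‖T x - T y‖ = ‖T (x - y)‖ := by
  rw [sub_eq_add_neg, ← map_neg_of_norm_map_add_eq h, ← h, ← sub_eq_add_neg]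

theorem map_add_eq_map_add_of_map_eq (h : ∀ f g : G, ‖T (f + g)‖ = ‖T f + T g‖) {x y : G}
    (hxy : T x = T y) (c : G) : T (x + c) = T (y + c) := by
  rw [← sub_eq_zero, ← norm_eq_zero, norm_map_sub_map_of_norm_map_add_eq h,
    add_sub_add_right_eq_sub, ← norm_map_sub_map_of_norm_map_add_eq h, hxy, sub_self, norm_zero]

/-- The isometry `T x ↦ T (x + c)` of `E`. -/
noncomputable def translateAlong (hsurj : Surjective T)
    (h : ∀ f g : G, ‖T (f + g)‖ = ‖T f + T g‖) (c : G) : E ≃ᵢ E :=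
  IsometryEquiv.mk' (fun e => T (surjInv hsurj e + c)) (fun e => T (surjInv hsurj e + -c))
    (fun e => by
      rw [map_add_eq_map_add_of_map_eq h (surjInv_eq hsurj _) c, neg_add_cancel_right,
        surjInv_eq hsurj])
    (Isometry.of_dist_eq fun e e' => by
      rw [dist_eq_norm, dist_eq_norm, norm_map_sub_map_of_norm_map_add_eq h,
        add_sub_add_right_eq_sub, ← norm_map_sub_map_of_norm_map_add_eq h, surjInv_eq hsurj,
        surjInv_eq hsurj])

theorem translateAlong_map (hsurj : Surjective T) (h : ∀ f g : G, ‖T (f + g)‖ = ‖T f + T g‖)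
    (c x : G) : translateAlong hsurj h c (T x) = T (x + c) :=
  map_add_eq_map_add_of_map_eq h (surjInv_eq hsurj _) c

theorem midpoint_map_eq_of_add_self_eq (hsurj : Surjective T)
    (h : ∀ f g : G, ‖T (f + g)‖ = ‖T f + T g‖) {a b m : G} (hm : m + m = a + b) :
    midpoint ℝ (T a) (T b) = T m := by
  set τ := translateAlong hsurj h (-m)
  have hb : b + -m = -(a + -m) :=
    calc b + -m = m + m - a + -m := by rw [hm]; abel
      _ = -(a + -m) := by abel
  apply τ.injective
  rw [τ.map_midpoint, translateAlong_map, translateAlong_map, translateAlong_map, hb,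
    map_neg_of_norm_map_add_eq h, midpoint_self_neg, add_neg_cancel,
    map_zero_of_norm_map_add_eq h]

theorem map_add_of_norm_map_add_eq (hsurj : Surjective T)
    (h : ∀ f g : G, ‖T (f + g)‖ = ‖T f + T g‖) (hhalf : ∀ x : G, ∃ m, m + m = x) (a b : G) :
    T (a + b) = T a + T b := by
  obtain ⟨m, hm⟩ := hhalf (a + b)
  have hab := midpoint_map_eq_of_add_self_eq hsurj h hm
  have hsum := midpoint_map_eq_of_add_self_eq hsurj h (hm.trans (add_zero _).symm)
  rw [map_zero_of_norm_map_add_eq h] at hsum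
  rw [← add_zero (T (a + b)), ← midpoint_add_self ℝ, ← midpoint_add_self ℝ (T a), hsum, hab]

end

variable {X Y : Type*} [TopologicalSpace X] [CompactSpace X] [T2Space X]
  [TopologicalSpace Y] [CompactSpace Y] [T2Space Y]

theorem stmt0 (T : C(X, ℂ) → C(Y, ℂ)) (hsurj : Function.Surjective T)
    (h : ∀ f g : C(X, ℂ), ‖T (f + g)‖ = ‖T f + T g‖) :
    ∀ f g : C(X, ℂ), T (f + g) = T f + T g :=
  map_add_of_norm_map_add_eq hsurj h fun x =>
    ⟨midpoint ℝ 0 x, by rw [midpoint_add_self, zero_add]⟩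
end

section
/- If U : G → B is a surjective map from an abelian group G onto a real Banach space B satisfying ‖U(x+y)‖ = ‖U(x)+U(y)‖ for all x, y ∈ G, then U is additive. -/
namespace FMaux

variable {G B : Type*} [AddCommGroup G] [NormedAddCommGroup B] [NormedSpace ℝ B]
variable (U : G → B)

theorem fm_zero (h : ∀ x y : G, ‖U (x + y)‖ = ‖U x + U y‖) : U 0 = 0 := by
  have h0 := h 0 0
  rw [add_zero] at h0
  have : ‖U 0 + U 0‖ = 2 * ‖U 0‖ := by
    rw [← two_smul ℝ (U 0), norm_smul]; simp [Real.norm_ofNat]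
  rw [this] at h0
  have : ‖U 0‖ = 0 := by linarith
  simpa using this

theorem fm_neg (h : ∀ x y : G, ‖U (x + y)‖ = ‖U x + U y‖) (x : G) : U (-x) = -U x := by
  have h0 := h x (-x)
  rw [add_neg_cancel, fm_zero U h, norm_zero] at h0
  have hz : U x + U (-x) = 0 := (norm_eq_zero).mp h0.symm
  exact (neg_eq_of_add_eq_zero_right hz).symm

theorem fm_diff (h : ∀ x y : G, ‖U (x + y)‖ = ‖U x + U y‖) (x y : G) :
    ‖U x - U y‖ = ‖U (x - y)‖ := by
  have := h x (-y)
  rw [fm_neg U h y] at this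
  rw [← sub_eq_add_neg] at this
  rw [this, sub_eq_add_neg]

theorem fm_congr (h : ∀ x y : G, ‖U (x + y)‖ = ‖U x + U y‖) {x y : G} (hxy : U x = U y)
    (c : G) : U (x + c) = U (y + c) := by
  have : ‖U (x + c) - U (y + c)‖ = 0 := by
    rw [fm_diff U h]
    have : x + c - (y + c) = x - y := by abel
    rw [this, ← fm_diff U h, hxy, sub_self, norm_zero]
  exact sub_eq_zero.mp (norm_eq_zero.mp this)

variable (sec : B → G) (hsec : ∀ b, U (sec b) = b)
variable (h : ∀ x y : G, ‖U (x + y)‖ = ‖U x + U y‖)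

/-- Translation by `y` transported to `B`. -/
noncomputable def T (y : G) : B ≃ᵢ B where
  toFun b := U (sec b + y)
  invFun b := U (sec b + -y)
  left_inv b := by
    show U (sec (U (sec b + y)) + -y) = b
    have h1 : U (sec (U (sec b + y)) + -y) = U ((sec b + y) + -y) :=
      fm_congr U h (hsec _) _
    rw [h1]
    have : sec b + y + -y = sec b := by abel
    rw [this, hsec]
  right_inv b := by
    show U (sec (U (sec b + -y)) + y) = b
    have h1 : U (sec (U (sec b + -y)) + y) = U ((sec b + -y) + y) :=
      fm_congr U h (hsec _) _
    rw [h1]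
    have : sec b + -y + y = sec b := by abel
    rw [this, hsec]
  isometry_toFun := by
    intro a b
    simp only [edist_dist, dist_eq_norm]
    congr 1
    rw [fm_diff U h]
    have : sec a + y - (sec b + y) = sec a - sec b := by abel
    rw [this, ← fm_diff U h, hsec, hsec]

theorem T_apply (y : G) (b : B) : T U sec hsec h y b = U (sec b + y) := rfl

theorem T_applyU (x y : G) : T U sec hsec h y (U x) = U (x + y) :=
  fm_congr U h (hsec (U x)) y

/-- The linear part of `T`, via Mazur–Ulam. -/
noncomputable def L (y : G) : B ≃ₗᵢ[ℝ] B :=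
  (T U sec hsec h y).toRealLinearIsometryEquiv

theorem L_applyU (x y : G) : L U sec hsec h y (U x) = U (x + y) - U y := by
  have := (T U sec hsec h y).toRealLinearIsometryEquiv_apply (U x)
  rw [L, this, T_applyU]
  congr 1
  have : T U sec hsec h y 0 = U y := by
    rw [← fm_zero U h, T_applyU, zero_add]
  rw [this]

end FMaux

theorem stmt1 {G B : Type*} [AddCommGroup G] [NormedAddCommGroup B] [NormedSpace ℝ B]
    [CompleteSpace B] (U : G → B) (hsurj : Function.Surjective U)
    (h : ∀ x y : G, ‖U (x + y)‖ = ‖U x + U y‖) :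
    ∀ x y : G, U (x + y) = U x + U y := by
  obtain ⟨sec, hsec⟩ := Function.Surjective.hasRightInverse hsurj
  intro x y
  set D : B := U (x + y) - U y - U x with hD
  -- key: for every real t, ‖t • D + U y‖ = ‖U y‖
  have key : ∀ t : ℝ, ‖t • D + U y‖ = ‖U y‖ := by
    intro t
    set z : G := sec (t • U x) with hz
    have hUz : U z = t • U x := hsec _
    have h1 : U (z + y) - U y = FMaux.L U sec hsec h y (U z) :=
      (FMaux.L_applyU U sec hsec h z y).symm
    have h2 : FMaux.L U sec hsec h y (U z) = t • FMaux.L U sec hsec h y (U x) := by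
      rw [hUz, map_smul]
    have h3 : U (z + y) - U z - U y = t • D := by
      have : U (z + y) - U z - U y = (U (z + y) - U y) - U z := by abel
      rw [this, h1, h2, hUz, hD, FMaux.L_applyU U sec hsec h x y]
      module
    have h4 : ‖U (z + y) - U z‖ = ‖U y‖ := by
      rw [FMaux.fm_diff U h]
      have : z + y - z = y := by abel
      rw [this]
    calc ‖t • D + U y‖ = ‖U (z + y) - U z‖ := by rw [← h3]; congr 1; abel
      _ = ‖U y‖ := h4
  -- conclude D = 0
  have hDzero : D = 0 := by
    by_contra hne
    have hpos : 0 < ‖D‖ := norm_pos_iff.mpr hne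
    set t : ℝ := (2 * ‖U y‖ + 1) / ‖D‖ with ht
    have htpos : 0 < t := by positivity
    have : ‖t • D‖ ≤ ‖t • D + U y‖ + ‖U y‖ := by
      have := norm_sub_norm_le (t • D + U y) (U y)
      simpa using (norm_le_add_norm_add (t • D) (U y))
    rw [key t, norm_smul, Real.norm_eq_abs, abs_of_pos htpos] at this
    rw [ht, div_mul_cancel₀] at this
    · linarith
    · exact ne_of_gt hpos
  rw [hD, sub_sub, sub_eq_zero] at hDzero
  rw [hDzero, add_comm]
end

section
/- Let T : C(X,ℂ) → C(Y,ℂ) be a bijective map satisfying ‖T(f+g)‖ = ‖T(f)+T(g)‖ and ‖T(fg)‖ = ‖T(f)T(g)‖ for all f, g. Then |T(1)(y)| = 1 for every y ∈ Y. -/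
/-!
Taking `g = 1` and using surjectivity, multiplication by `u = T 1` preserves the sup norm of
every `v ∈ C(Y, ℂ)`. With `v = 1` this gives `‖u‖ = 1`. If `|u y| < 1`, pick `|u y| < c < 1`:
a Urysohn function `v` equal to `1` on `{|u| ≤ |u y|}` and to `0` on `{|u| ≥ c}` has `‖v‖ = 1`
but `‖v u‖ ≤ c`.
-/

variable {X Y : Type*} [TopologicalSpace X] [CompactSpace X] [T2Space X]
  [TopologicalSpace Y] [CompactSpace Y] [T2Space Y]

namespace ContinuousMap

variable {Z 𝕜 : Type*} [TopologicalSpace Z] [CompactSpace Z] [NormalSpace Z] [RCLike 𝕜]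

theorem exists_norm_mul_lt_norm_of_norm_apply_lt_one {u : C(Z, 𝕜)} {y : Z}
    (hy : ‖u y‖ < 1) : ∃ v : C(Z, 𝕜), ‖v * u‖ < ‖v‖ := by
  obtain ⟨c, hyc, hc1⟩ := exists_between hy
  have hc0 : 0 ≤ c := (norm_nonneg _).trans hyc.le
  have hnu : Continuous fun z => ‖u z‖ := by fun_prop
  obtain ⟨φ, hφ_large, hφ_small, hφ_mem⟩ := exists_continuous_zero_one_of_isClosed
    (isClosed_le continuous_const hnu) (isClosed_le hnu continuous_const)
    (Set.disjoint_left.mpr fun z (hcz : c ≤ ‖u z‖) (hzy : ‖u z‖ ≤ ‖u y‖) => by linarith)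
  let v : C(Z, 𝕜) := (⟨RCLike.ofReal, RCLike.continuous_ofReal⟩ : C(ℝ, 𝕜)).comp φ
  have hv_apply (z : Z) : ‖v z‖ = φ z := by
    simp [v, abs_of_nonneg (hφ_mem z).1]
  have hv_norm : 1 ≤ ‖v‖ := by
    simpa [hv_apply, hφ_small (le_refl ‖u y‖)] using v.norm_coe_le_norm y
  have hvu_norm : ‖v * u‖ ≤ c := by
    refine (norm_le _ hc0).mpr fun z => ?_
    rw [mul_apply, norm_mul, hv_apply]
    rcases lt_or_ge ‖u z‖ c with hz | hz
    · obtain ⟨-, hφ1⟩ := hφ_mem z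
      calc φ z * ‖u z‖ ≤ 1 * c := mul_le_mul hφ1 hz.le (norm_nonneg _) zero_le_one
        _ = c := one_mul c
    · simp [hφ_large hz, hc0]
  exact ⟨v, by linarith⟩

theorem norm_apply_eq_one_of_forall_norm_mul_eq {u : C(Z, 𝕜)}
    (hu : ∀ v : C(Z, 𝕜), ‖v * u‖ = ‖v‖) (y : Z) : ‖u y‖ = 1 := by
  have : Nonempty Z := ⟨y⟩
  refine le_antisymm ?_ (not_lt.mp fun hy => ?_)
  · calc ‖u y‖ ≤ ‖u‖ := u.norm_coe_le_norm y
      _ = 1 := by simpa using hu 1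
  · obtain ⟨v, hv⟩ := exists_norm_mul_lt_norm_of_norm_apply_lt_one hy
    exact hv.ne (hu v)

end ContinuousMap

theorem stmt5_general (T : C(X, ℂ) → C(Y, ℂ)) (hbij : Function.Bijective T)
    (h2 : ∀ f g : C(X, ℂ), ‖T (f * g)‖ = ‖T f * T g‖) :
    ∀ y : Y, ‖T 1 y‖ = 1 := by
  refine ContinuousMap.norm_apply_eq_one_of_forall_norm_mul_eq fun v => ?_
  obtain ⟨f, rfl⟩ := hbij.surjective v
  simpa using (h2 f 1).symm

theorem stmt5 (T : C(X, ℂ) → C(Y, ℂ)) (hbij : Function.Bijective T)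
    (h1 : ∀ f g : C(X, ℂ), ‖T (f + g)‖ = ‖T f + T g‖)
    (h2 : ∀ f g : C(X, ℂ), ‖T (f * g)‖ = ‖T f * T g‖) :
    ∀ y : Y, ‖T 1 y‖ = 1 :=
  stmt5_general T hbij h2
end

section
/- Let T : C(X,ℂ) → C(Y,ℂ) be a bijective map satisfying ‖T(f+g)‖ = ‖T(f)+T(g)‖, ‖T(fg)‖ = ‖T(f)T(g)‖, and T(conj f) = conj(T f) for all f, g. Then T(1) takes only the values 1 and −1 on Y. -/
variable {X Y : Type*} [TopologicalSpace X] [CompactSpace X] [T2Space X]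
  [TopologicalSpace Y] [CompactSpace Y] [T2Space Y]

theorem stmt6 (T : C(X, ℂ) → C(Y, ℂ)) (hbij : Function.Bijective T)
    (h1 : ∀ f g : C(X, ℂ), ‖T (f + g)‖ = ‖T f + T g‖)
    (h2 : ∀ f g : C(X, ℂ), ‖T (f * g)‖ = ‖T f * T g‖)
    (h3 : ∀ f : C(X, ℂ), T (star f) = star (T f)) :
    ∀ y : Y, T 1 y = 1 ∨ T 1 y = -1 := by
  intro y0
  set g := T 1 with hg
  have hstar : star g = g := by
    rw [hg, ← h3]
    norm_num
  have key : ∀ h : C(Y, ℂ), ‖h‖ = ‖h * g‖ := by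
    intro h
    obtain ⟨f, rfl⟩ := hbij.2 h
    have := h2 f 1
    rwa [mul_one] at this
  -- pointwise lower bound
  have hlow : ∀ y : Y, 1 ≤ ‖g y‖ := by
    intro y
    by_contra hlt
    push_neg at hlt
    set c := (‖g y‖ + 1) / 2 with hc
    have hc0 : 0 ≤ c := by positivity
    have hc1 : c < 1 := by rw [hc]; linarith
    have hyc : ‖g y‖ < c := by rw [hc]; linarith
    set U := {z : Y | ‖g z‖ < c} with hU
    have hUopen : IsOpen U := isOpen_lt (by fun_prop) continuous_const
    have hdisj : Disjoint Uᶜ ({y} : Set Y) := by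
      rw [Set.disjoint_singleton_right]
      simp only [Set.mem_compl_iff, not_not]
      exact hyc
    obtain ⟨φ, hφ0, hφ1, hφmem⟩ := exists_continuous_zero_one_of_isClosed
      hUopen.isClosed_compl isClosed_singleton hdisj
    set h : C(Y, ℂ) := ⟨fun z => ((φ z : ℝ) : ℂ),
      Complex.continuous_ofReal.comp φ.continuous⟩ with hh
    have h1le : (1 : ℝ) ≤ ‖h‖ := by
      have := h.norm_coe_le_norm y
      have hy1 : φ y = 1 := hφ1 rfl
      simpa [hh, hy1] using this
    have hhc : ‖h * g‖ ≤ c := by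
      apply ContinuousMap.norm_le _ hc0 |>.2
      intro z
      by_cases hz : z ∈ U
      · have hb1 : ‖h z‖ ≤ 1 := by
          simp only [hh, ContinuousMap.coe_mk, Complex.norm_real]
          exact abs_le.2 ⟨by linarith [(hφmem z).1], (hφmem z).2⟩
        have : ‖(h * g) z‖ = ‖h z‖ * ‖g z‖ := by simp
        rw [this]
        calc ‖h z‖ * ‖g z‖ ≤ 1 * c := by
              apply mul_le_mul hb1 (le_of_lt hz) (norm_nonneg _) zero_le_one
          _ = c := one_mul c
      · have : φ z = 0 := hφ0 hz
        simp [hh, this, hc0]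
    have := key h
    linarith
  -- norm of g
  have hsq : ‖g‖ = ‖g‖ * ‖g‖ := by
    have := key g
    rwa [← congrArg (‖· * g‖) hstar, CStarRing.norm_star_mul_self] at this
  have hle : ‖g y0‖ ≤ ‖g‖ := g.norm_coe_le_norm y0
  have hg1 : ‖g y0‖ = 1 := by
    have h1 := hlow y0
    nlinarith
  -- g y0 is real
  have hreal : (starRingEnd ℂ) (g y0) = g y0 := by
    have := congrArg (fun f : C(Y, ℂ) => f y0) hstar
    simpa using this
  have hre : ((g y0).re : ℂ) = g y0 := Complex.conj_eq_iff_re.1 hreal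
  have habs : |(g y0).re| = 1 := by
    have h' : ‖((g y0).re : ℂ)‖ = 1 := by rw [hre]; exact hg1
    simpa using h'
  rcases abs_eq (by norm_num : (0:ℝ) ≤ 1) |>.1 habs with h | h
  · left; rw [← hre, h]; norm_num
  · right; rw [← hre, h]; norm_num
end

section
/- Let T : C(X,ℂ) → C(Y,ℂ) be a bijective map satisfying ‖T(f+g)‖ = ‖T(f)+T(g)‖, ‖T(fg)‖ = ‖T(f)T(g)‖, and T(conj f) = conj(T f) for all f, g, and define T₀(f) = T(1)·T(f). Then T₀ is bijective, additive, satisfies ‖T₀(fg)‖ = ‖T₀(f)T₀(g)‖, T₀(1) = 1, T₀(r•f) = r•T₀(f) for all r ∈ ℚ, and T₀(conj f) = conj(T₀ f). -/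
private lemma mazur_ulam_additive {E F : Type*} [AddCommGroup E] [NormedAddCommGroup F]
    [Module ℝ F] (Φ : E → F) (N : E → ℝ) (hbij : Function.Bijective Φ)
    (hiso : ∀ h k : E, ‖Φ h - Φ k‖ = N (h - k))
    (hN2 : ∀ h : E, N (h + h) = 2 * N h)
    (hNs : ∀ h : E, N (-h) = N h)
    (hΦ0 : Φ 0 = 0) :
    ∀ a b : E, Φ (a + b) = Φ a + Φ b := by
  have hNnonneg : ∀ h, 0 ≤ N h := fun h => by
    have := hiso h 0; rw [sub_zero] at this; rw [← this]; positivity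
  have hNdef : ∀ h, N h = 0 → h = 0 := by
    intro h hh
    have h1 := hiso h 0
    rw [sub_zero, hh] at h1
    have h2 : Φ h = Φ 0 := norm_sub_eq_zero_iff.mp h1
    exact hbij.1 h2
  have htri : ∀ a b c : E, N (a - c) ≤ N (a - b) + N (b - c) := by
    intro a b c
    rw [← hiso, ← hiso, ← hiso]
    have : Φ a - Φ c = (Φ a - Φ b) + (Φ b - Φ c) := by abel
    rw [this]; exact norm_add_le _ _
  have key : ∀ x y z : E, x + y = z + z → Φ z + Φ z = Φ x + Φ y := by
    intro x y z hz
    set G : Set (E → E) :=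
      {e | Function.Bijective e ∧ (∀ a b, N (e a - e b) = N (a - b)) ∧ e x = x ∧ e y = y} with hG
    set S : Set ℝ := (fun e => N (e z - z)) '' G with hS
    have hidG : id ∈ G := ⟨Function.bijective_id, by intro a b; rfl, rfl, rfl⟩
    have hSne : S.Nonempty := ⟨N (z - z), ⟨id, hidG, rfl⟩⟩
    have hbdd : ∀ e ∈ G, N (e z - z) ≤ 2 * N (x - z) := by
      rintro e ⟨ebij, eiso, ex, ey⟩
      have h1 : N (e z - z) ≤ N (e z - x) + N (x - z) := htri _ _ _
      have h2 : N (e z - x) = N (z - x) := by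
        conv_lhs => rw [← ex]
        exact eiso z x
      have h3 : N (z - x) = N (x - z) := by rw [← neg_sub x z, hNs]
      linarith
    have hSbdd : BddAbove S := ⟨2 * N (x - z), by rintro r ⟨e, he, rfl⟩; exact hbdd e he⟩
    set ρ : E → E := fun a => z + z - a with hρ
    have hρρ : ∀ a, ρ (ρ a) = a := fun a => by show z + z - (z + z - a) = a; abel
    have hρbij : Function.Bijective ρ := Function.bijective_iff_has_inverse.mpr ⟨ρ, hρρ, hρρ⟩
    have hρiso : ∀ a b, N (ρ a - ρ b) = N (a - b) := by
      intro a b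
      have h : ρ a - ρ b = -(a - b) := by show (z+z-a) - (z+z-b) = -(a-b); abel
      rw [h, hNs]
    have hρx : ρ x = y := by show z + z - x = y; rw [← hz, add_sub_cancel_left]
    have hρy : ρ y = x := by show z + z - y = x; rw [← hz, add_sub_cancel_right]
    have hρz : ρ z = z := by show z + z - z = z; abel
    have hdouble : ∀ e ∈ G, (2 * N (e z - z)) ∈ S := by
      rintro e ⟨ebij, eiso, ex, ey⟩
      set ee := Equiv.ofBijective e ebij with hee
      set g : E → E := ⇑ee.symm with hg
      have hge : ∀ a, e (g a) = a := fun a => Equiv.ofBijective_apply_symm_apply e ebij a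
      have hgE : ∀ a, g (e a) = a := fun a => ee.symm_apply_apply a
      have giso : ∀ a b, N (g a - g b) = N (a - b) := by
        intro a b
        rw [← eiso (g a) (g b), hge, hge]
      have gx : g x = x := by conv_lhs => rw [← ex]; rw [hgE]
      have gy : g y = y := by conv_lhs => rw [← ey]; rw [hgE]
      have gbij : Function.Bijective g := ee.symm.bijective
      refine ⟨ρ ∘ g ∘ ρ ∘ e, ⟨hρbij.comp (gbij.comp (hρbij.comp ebij)), ?_, ?_, ?_⟩, ?_⟩
      · intro a b
        simp only [Function.comp_apply]
        rw [hρiso, giso, hρiso, eiso]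
      · simp only [Function.comp_apply]
        rw [ex, hρx, gy, hρy]
      · simp only [Function.comp_apply]
        rw [ey, hρy, gx, hρx]
      · simp only [Function.comp_apply]
        calc N (ρ (g (ρ (e z))) - z) = N (ρ (g (ρ (e z))) - ρ z) := by rw [hρz]
          _ = N (g (ρ (e z)) - z) := hρiso _ _
          _ = N (g (ρ (e z)) - g (e z)) := by rw [hgE]
          _ = N (ρ (e z) - e z) := giso _ _
          _ = N ((z - e z) + (z - e z)) := by
              congr 1
              show z + z - e z - e z = (z - e z) + (z - e z); abel
          _ = 2 * N (z - e z) := hN2 _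
          _ = 2 * N (e z - z) := by rw [← neg_sub (e z) z, hNs]
    set lam := sSup S with hlam
    have h2lam : ∀ r ∈ S, 2 * r ≤ lam := by
      rintro r ⟨e, he, rfl⟩
      exact le_csSup hSbdd (hdouble e he)
    have hlamle : lam ≤ lam / 2 := csSup_le hSne (fun r hr => by linarith [h2lam r hr])
    have hfix : ∀ e ∈ G, e z = z := by
      intro e he
      have ha : N (e z - z) ≤ lam := le_csSup hSbdd ⟨e, he, rfl⟩
      have hb : 0 ≤ N (e z - z) := hNnonneg _
      have hc : N (e z - z) = 0 := by
        have h0lam : 0 ≤ lam := hb.trans ha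
        have : lam ≤ 0 := by linarith
        linarith
      exact sub_eq_zero.mp (hNdef _ hc)
    set eΦ := Equiv.ofBijective Φ hbij with heΦ
    set ψ : E → E := fun a => eΦ.symm (Φ x + Φ y - Φ a) with hψ
    have hΦψ : ∀ a, Φ (ψ a) = Φ x + Φ y - Φ a := fun a =>
      Equiv.ofBijective_apply_symm_apply Φ hbij _
    have hψψ : ∀ a, ψ (ψ a) = a := by
      intro a
      have : Φ x + Φ y - Φ (ψ a) = Φ a := by rw [hΦψ]; abel
      show eΦ.symm (Φ x + Φ y - Φ (ψ a)) = a
      rw [hΦψ]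
      have h4 : Φ x + Φ y - (Φ x + Φ y - Φ a) = Φ a := by abel
      rw [h4]
      exact eΦ.symm_apply_apply a
    have hψbij : Function.Bijective ψ := Function.bijective_iff_has_inverse.mpr ⟨ψ, hψψ, hψψ⟩
    have hψiso : ∀ a b, N (ψ a - ψ b) = N (a - b) := by
      intro a b
      rw [← hiso (ψ a) (ψ b), hΦψ, hΦψ, ← hiso a b]
      have : (Φ x + Φ y - Φ a) - (Φ x + Φ y - Φ b) = -(Φ a - Φ b) := by abel
      rw [this, norm_neg]
    have hψx : ψ x = y := by
      show eΦ.symm (Φ x + Φ y - Φ x) = y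
      have h5 : Φ x + Φ y - Φ x = Φ y := by abel
      rw [h5]; exact eΦ.symm_apply_apply y
    have hψy : ψ y = x := by
      show eΦ.symm (Φ x + Φ y - Φ y) = x
      have h5 : Φ x + Φ y - Φ y = Φ x := by abel
      rw [h5]; exact eΦ.symm_apply_apply x
    have hmem : (ρ ∘ ψ) ∈ G := by
      refine ⟨hρbij.comp hψbij, ?_, ?_, ?_⟩
      · intro a b; simp only [Function.comp_apply]; rw [hρiso, hψiso]
      · simp only [Function.comp_apply]; rw [hψx, hρy]
      · simp only [Function.comp_apply]; rw [hψy, hρx]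
    have hfz := hfix _ hmem
    simp only [Function.comp_apply] at hfz
    have hψz : ψ z = z := by
      have := congrArg ρ hfz
      rw [hρρ, hρz] at this
      exact this
    have := hΦψ z
    rw [hψz] at this
    rw [eq_sub_iff_add_eq] at this
    exact this
  intro a b
  have hdbl : ∀ c : E, Φ (c + c) = Φ c + Φ c := by
    intro c
    have h := key (c + c) 0 c (by abel)
    rw [hΦ0, add_zero] at h
    exact h.symm
  have h := key (a + a) (b + b) (a + b) (by abel)
  rw [hdbl, hdbl] at h
  have h2 : (2:ℝ) • Φ (a + b) = (2:ℝ) • (Φ a + Φ b) := by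
    rw [two_smul, two_smul, h]; abel
  exact smul_right_injective F (by norm_num : (2:ℝ) ≠ 0) h2

variable {X Y : Type*} [TopologicalSpace X] [CompactSpace X] [T2Space X]
  [TopologicalSpace Y] [CompactSpace Y] [T2Space Y]

set_option maxHeartbeats 1000000 in
theorem stmt7 (T : C(X, ℂ) → C(Y, ℂ)) (hbij : Function.Bijective T)
    (h1 : ∀ f g : C(X, ℂ), ‖T (f + g)‖ = ‖T f + T g‖)
    (h2 : ∀ f g : C(X, ℂ), ‖T (f * g)‖ = ‖T f * T g‖)
    (h3 : ∀ f : C(X, ℂ), T (star f) = star (T f)) :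
    Function.Bijective (fun f => T 1 * T f : C(X, ℂ) → C(Y, ℂ)) ∧
    (∀ f g : C(X, ℂ), T 1 * T (f + g) = T 1 * T f + T 1 * T g) ∧
    (∀ f g : C(X, ℂ), ‖T 1 * T (f * g)‖ = ‖(T 1 * T f) * (T 1 * T g)‖) ∧
    T 1 * T 1 = 1 ∧
    (∀ (r : ℚ) (f : C(X, ℂ)), T 1 * T ((r : ℂ) • f) = (r : ℂ) • (T 1 * T f)) ∧
    (∀ f : C(X, ℂ), T 1 * T (star f) = star (T 1 * T f)) := by
  have hT0 : T 0 = 0 := by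
    have h := h1 0 0
    rw [add_zero] at h
    have h' : ‖T 0 + T 0‖ = 2 * ‖T 0‖ := by
      rw [← two_smul ℝ (T 0), norm_smul]; norm_num
    rw [h'] at h
    have : ‖T 0‖ = 0 := by linarith
    exact norm_eq_zero.mp this
  have hneg : ∀ f, T (-f) = - T f := by
    intro f
    have h := h1 f (-f)
    rw [add_neg_cancel, hT0, norm_zero] at h
    have h' : T f + T (-f) = 0 := norm_eq_zero.mp h.symm
    exact (neg_eq_of_add_eq_zero_right h').symm
  have hstar1 : star (T 1) = T 1 := by
    have h := h3 1
    rw [star_one] at h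
    exact h.symm
  -- multiplying by T 1 preserves norm
  have hmulT1 : ∀ g : C(Y, ℂ), ‖g * T 1‖ = ‖g‖ := by
    intro g
    obtain ⟨f, rfl⟩ := hbij.2 g
    have h := h2 f 1
    rw [mul_one] at h
    exact h.symm
  have hmulT1' : ∀ g : C(Y, ℂ), ‖T 1 * g‖ = ‖g‖ := by
    intro g; rw [mul_comm]; exact hmulT1 g
  -- ‖(T 1)^(n+1)‖ = ‖T 1‖
  have hpow : ∀ n : ℕ, ‖(T 1) ^ (n + 1)‖ = ‖T 1‖ := by
    intro n
    induction n with
    | zero => rw [pow_one]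
    | succ n ih => rw [pow_succ, hmulT1, ih]
  -- pointwise norm ≤ 1
  have hle : ∀ y : Y, ‖T 1 y‖ ≤ 1 := by
    intro y
    by_contra hc
    push_neg at hc
    obtain ⟨n, hn⟩ := pow_unbounded_of_one_lt (‖T 1‖) hc
    have hy1 : (1:ℝ) ≤ ‖T 1 y‖ := le_of_lt hc
    have h4 : ‖T 1 y‖ ^ n ≤ ‖T 1 y‖ ^ (n + 1) := by
      apply pow_le_pow_right₀ hy1 (Nat.le_succ n)
    have h5 : ‖T 1 y‖ ^ (n + 1) = ‖((T 1) ^ (n + 1)) y‖ := by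
      rw [ContinuousMap.pow_apply, norm_pow]
    have h6 : ‖((T 1) ^ (n + 1)) y‖ ≤ ‖(T 1) ^ (n + 1)‖ :=
      ContinuousMap.norm_coe_le_norm _ y
    rw [hpow n] at h6
    linarith
  -- pointwise norm ≥ 1 (Urysohn)
  have hge : ∀ y : Y, 1 ≤ ‖T 1 y‖ := by
    intro y0
    by_contra hc
    push_neg at hc
    set c : ℝ := (‖T 1 y0‖ + 1) / 2 with hcdef
    have hc1 : c < 1 := by
      rw [hcdef]; linarith
    have hc0 : 0 ≤ c := by
      rw [hcdef]; positivity
    have hcy : ‖T 1 y0‖ < c := by rw [hcdef]; linarith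
    set U : Set Y := {y | ‖T 1 y‖ < c} with hU
    have hUopen : IsOpen U := by
      have : Continuous fun y => ‖T 1 y‖ := (map_continuous (T 1)).norm
      exact isOpen_lt this continuous_const
    have hy0U : y0 ∈ U := hcy
    obtain ⟨g, hg0, hg1, hg01⟩ := exists_continuous_zero_one_of_isClosed
      (isClosed_compl_iff.mpr hUopen) (isClosed_singleton (x := y0))
      (by simp [Set.disjoint_singleton_right, hy0U])
    set gc : C(Y, ℂ) := ⟨fun y => ((g y : ℝ) : ℂ), by continuity⟩ with hgc
    have hgcnorm : ‖gc‖ = 1 := by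
      apply le_antisymm
      · rw [ContinuousMap.norm_le _ zero_le_one]
        intro y
        have := hg01 y
        simp only [Set.mem_Icc] at this
        simp only [hgc, ContinuousMap.coe_mk, Complex.norm_real]
        rw [Real.norm_eq_abs, abs_of_nonneg this.1]; exact this.2
      · have h7 : ‖gc y0‖ ≤ ‖gc‖ := ContinuousMap.norm_coe_le_norm _ y0
        have h8 : gc y0 = 1 := by
          simp only [hgc, ContinuousMap.coe_mk]
          rw [hg1 (Set.mem_singleton y0)]; norm_num
        rw [h8] at h7; simpa using h7
    have hsmall : ‖gc * T 1‖ ≤ c := by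
      rw [ContinuousMap.norm_le _ hc0]
      intro y
      by_cases hy : y ∈ U
      · have hgy : ‖gc y‖ ≤ 1 := by
          have := hg01 y
          simp only [Set.mem_Icc] at this
          simp only [hgc, ContinuousMap.coe_mk, Complex.norm_real]
          rw [Real.norm_eq_abs, abs_of_nonneg this.1]; exact this.2
        have : ‖T 1 y‖ < c := hy
        calc ‖(gc * T 1) y‖ = ‖gc y‖ * ‖T 1 y‖ := by
              rw [ContinuousMap.mul_apply, norm_mul]
          _ ≤ 1 * c := by
              apply mul_le_mul hgy (le_of_lt this) (norm_nonneg _) zero_le_one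
          _ = c := one_mul c
      · have : g y = 0 := hg0 hy
        have hz : gc y = 0 := by simp [hgc, this]
        rw [ContinuousMap.mul_apply, hz, zero_mul, norm_zero]
        exact hc0
    rw [hmulT1 gc, hgcnorm] at hsmall
    linarith
  -- pointwise star
  have hstar1y : ∀ y : Y, star (T 1 y) = T 1 y := by
    intro y
    rw [← ContinuousMap.star_apply, hstar1]
  -- T 1 * T 1 = 1
  have hsq : T 1 * T 1 = 1 := by
    ext y
    rw [ContinuousMap.mul_apply, ContinuousMap.one_apply]
    have habs : ‖T 1 y‖ = 1 := le_antisymm (hle y) (hge y)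
    calc T 1 y * T 1 y = T 1 y * star (T 1 y) := by rw [hstar1y y]
      _ = (‖T 1 y‖ : ℂ) ^ 2 := by
          rw [Complex.star_def, Complex.mul_conj']
      _ = 1 := by rw [habs]; norm_num
  -- assemble
  have hbij0 : Function.Bijective (fun f => T 1 * T f : C(X, ℂ) → C(Y, ℂ)) := by
    constructor
    · intro a b hab
      simp only at hab
      have : T 1 * (T 1 * T a) = T 1 * (T 1 * T b) := by rw [hab]
      rw [← mul_assoc, ← mul_assoc, hsq, one_mul, one_mul] at this
      exact hbij.1 this
    · intro h
      obtain ⟨f, hf⟩ := hbij.2 (T 1 * h)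
      exact ⟨f, by simp only [hf, ← mul_assoc, hsq, one_mul]⟩
  have hadd : ∀ f g : C(X, ℂ), T 1 * T (f + g) = T 1 * T f + T 1 * T g := by
    apply mazur_ulam_additive (fun f => T 1 * T f) (fun f => ‖T f‖) hbij0
    · intro h k
      show ‖T 1 * T h - T 1 * T k‖ = ‖T (h - k)‖
      rw [← mul_sub]
      rw [hmulT1']
      have hd : T h - T k = T h + T (-k) := by rw [hneg, sub_eq_add_neg]
      rw [hd, ← h1 h (-k), ← sub_eq_add_neg]
    · intro h
      show ‖T (h + h)‖ = 2 * ‖T h‖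
      rw [h1 h h, ← two_smul ℝ (T h), norm_smul]
      norm_num
    · intro h
      show ‖T (-h)‖ = ‖T h‖
      rw [hneg, norm_neg]
    · show T 1 * T 0 = 0
      rw [hT0, mul_zero]
  refine ⟨hbij0, hadd, ?_, hsq, ?_, ?_⟩
  · intro f g
    have hR : (T 1 * T f) * (T 1 * T g) = (T f * T g) * (T 1 * T 1) := by
      rw [mul_mul_mul_comm, mul_comm (T 1 * T 1)]
    rw [hR, hsq, mul_one, hmulT1', h2]
  · intro r f
    have hzero : T 1 * T 0 = 0 := by rw [hT0, mul_zero]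
    have hng : ∀ g : C(X, ℂ), T 1 * T (-g) = -(T 1 * T g) := by
      intro g; rw [hneg, mul_neg]
    have hnat : ∀ (n : ℕ) (g : C(X, ℂ)), T 1 * T ((n:ℂ) • g) = (n:ℂ) • (T 1 * T g) := by
      intro n
      induction n with
      | zero => intro g; simp only [Nat.cast_zero, zero_smul, hzero]
      | succ n ih =>
        intro g
        have e1 : ((n+1 : ℕ) : ℂ) • g = (n:ℂ) • g + g := by
          push_cast; rw [add_smul, one_smul]
        have e2 : ((n+1 : ℕ) : ℂ) • (T 1 * T g) = (n:ℂ) • (T 1 * T g) + T 1 * T g := by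
          push_cast; rw [add_smul, one_smul]
        rw [e1, e2, hadd, ih]
    have hq0 : (r.den : ℂ) ≠ 0 := Nat.cast_ne_zero.mpr r.den_ne_zero
    have hqr : (r.den : ℂ) * (r : ℂ) = (r.num : ℂ) := by
      have h9 : ((r.den : ℚ) * r : ℚ) = (r.num : ℚ) := by
        rw [mul_comm]; exact_mod_cast Rat.mul_den_eq_num r
      exact_mod_cast h9
    have hint : T 1 * T ((r.num : ℂ) • f) = (r.num : ℂ) • (T 1 * T f) := by
      rcases Int.eq_nat_or_neg r.num with ⟨n, hn | hn⟩
      · rw [hn, Int.cast_natCast]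
        exact hnat n f
      · rw [hn, Int.cast_neg, Int.cast_natCast, neg_smul, neg_smul, hng, hnat]
    have keyL : (r.den : ℂ) • (T 1 * T ((r:ℂ) • f)) = (r.num : ℂ) • (T 1 * T f) := by
      rw [← hnat r.den ((r:ℂ) • f), smul_smul, hqr, hint]
    have keyR : (r.den : ℂ) • ((r:ℂ) • (T 1 * T f)) = (r.num : ℂ) • (T 1 * T f) := by
      rw [smul_smul, hqr]
    exact smul_right_injective C(Y, ℂ) hq0 (keyL.trans keyR.symm)
  · intro f
    rw [h3 f, star_mul', hstar1]
end

section
/- Let S : C(X,ℂ) → C(Y,ℂ) be a bijective additive map with S(1) = 1, S(r•f) = r•S(f) for all rationals r, S(conj f) = conj(S f), mapping real-valued functions to real-valued functions, and satisfying ‖S(fg)‖ = ‖S(f)S(g)‖ for all f, g. If f ∈ C(X,ℂ) satisfies f(x) ≥ 0 for all x ∈ X (in particular f is real-valued), then S(f)(y) ≥ 0 for all y ∈ Y. -/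
variable {X Y : Type*} [TopologicalSpace X] [CompactSpace X] [T2Space X]
  [TopologicalSpace Y] [CompactSpace Y] [T2Space Y]

set_option maxHeartbeats 1000000 in
theorem stmt8 (S : C(X, ℂ) → C(Y, ℂ)) (hbij : Function.Bijective S)
    (hadd : ∀ f g : C(X, ℂ), S (f + g) = S f + S g)
    (hone : S 1 = 1)
    (hq : ∀ (r : ℚ) (f : C(X, ℂ)), S ((r : ℂ) • f) = (r : ℂ) • S f)
    (hstar : ∀ f : C(X, ℂ), S (star f) = star (S f))
    (hreal : ∀ f : C(X, ℂ), (∀ x, (f x).im = 0) → ∀ y, (S f y).im = 0)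
    (hnm : ∀ f g : C(X, ℂ), ‖S (f * g)‖ = ‖S f * S g‖) :
    ∀ f : C(X, ℂ), (∀ x, (f x).im = 0 ∧ 0 ≤ (f x).re) →
      ∀ y, (S f y).im = 0 ∧ 0 ≤ (S f y).re := by
  have hneg : ∀ f : C(X, ℂ), S (-f) = - S f := by
    intro f
    have := hq (-1) f
    simpa using this
  have hsub : ∀ a b : C(X, ℂ), S (a - b) = S a - S b := by
    intro a b
    rw [sub_eq_add_neg, hadd, hneg, sub_eq_add_neg]
  intro f hf
  have him : ∀ y, (S f y).im = 0 := hreal f (fun x => (hf x).1)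
  -- choose rational r with 0 < r ≤ 1 and r^2 * ‖S f‖ ≤ 1
  set n : ℕ := ⌈‖S f‖⌉₊ + 1 with hn
  have hn0 : 0 < (n : ℝ) := by positivity
  set r : ℚ := 1 / n with hrdef
  have hr0 : (0:ℝ) < (r : ℝ) := by
    rw [hrdef]; push_cast; positivity
  have hrval : (r : ℝ) = (n : ℝ)⁻¹ := by rw [hrdef]; push_cast; ring
  have hn1 : (1:ℝ) ≤ (n : ℝ) := by exact_mod_cast Nat.one_le_iff_ne_zero.mpr (by omega)
  have hr1 : (r : ℝ) ≤ 1 := by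
    rw [hrval]; exact inv_le_one_of_one_le₀ hn1
  have hMn : ‖S f‖ ≤ (n : ℝ) := by
    calc ‖S f‖ ≤ (⌈‖S f‖⌉₊ : ℝ) := Nat.le_ceil _
    _ ≤ n := by exact_mod_cast Nat.le_succ _
  have hrM : (r : ℝ) * ((r : ℝ) * ‖S f‖) ≤ 1 := by
    have h1 : (r : ℝ) * ‖S f‖ ≤ 1 := by
      rw [hrval, inv_mul_le_iff₀ hn0, mul_one]
      exact hMn
    nlinarith [norm_nonneg (S f)]
  have hfx : ∀ x, f x = ((f x).re : ℂ) := fun x =>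
    Complex.ext (by simp) (by simp [(hf x).1])
  -- the scaled square root g
  set g : C(X, ℂ) := ⟨fun x => (((r : ℝ) * Real.sqrt ((f x).re) : ℝ) : ℂ),
    Complex.continuous_ofReal.comp (continuous_const.mul
      (Real.continuous_sqrt.comp (Complex.continuous_re.comp f.continuous)))⟩ with hgdef
  have hg : g * g = ((r * r : ℚ) : ℂ) • f := by
    ext x
    simp only [ContinuousMap.mul_apply, ContinuousMap.smul_apply, hgdef,
      ContinuousMap.coe_mk]
    have hs : Real.sqrt ((f x).re) * Real.sqrt ((f x).re) = (f x).re :=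
      Real.mul_self_sqrt (hf x).2
    rw [smul_eq_mul, hfx x]
    norm_cast
    push_cast
    nlinarith [hs]
  set h : C(Y, ℂ) := S g with hhdef
  have hhim : ∀ y, (h y).im = 0 := hreal g (fun x => by simp [hgdef])
  have hstarh : star h = h := by
    ext y
    exact Complex.ext (by simp) (by simp [hhim y])
  have hSq : S (g * g) = ((r * r : ℚ) : ℂ) • S f := by
    rw [hg, hq]
  have hnormhh : ‖h * h‖ = ‖h‖ * ‖h‖ := by
    have := CStarRing.norm_star_mul_self (x := h)
    rwa [hstarh] at this
  have hnorm1 : ‖h‖ ≤ 1 := by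
    have e1 : ‖h‖ * ‖h‖ = (r : ℝ) * ((r : ℝ) * ‖S f‖) := by
      rw [← hnormhh, ← hnm g g, hSq, norm_smul]
      have : ‖((r * r : ℚ) : ℂ)‖ = (r:ℝ) * (r:ℝ) := by
        rw [Complex.norm_ratCast, abs_of_pos (by positivity)]
        push_cast; ring
      rw [this]; ring
    nlinarith [norm_nonneg h]
  -- key norm bound
  have key : ‖(1 : C(Y, ℂ)) - ((r * r : ℚ) : ℂ) • S f‖ ≤ 1 := by
    have e2 : (1 : C(X, ℂ)) - ((r * r : ℚ) : ℂ) • f = (1 - g) * (1 + g) := by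
      rw [← hg]; ring
    have e3 : S ((1 : C(X, ℂ)) - ((r * r : ℚ) : ℂ) • f) = 1 - ((r * r : ℚ) : ℂ) • S f := by
      rw [hsub, hone, hq]
    rw [← e3, e2, hnm, hsub, hadd, hone]
    have e4 : ((1 : C(Y,ℂ)) - h) * (1 + h) = 1 - h * h := by ring
    rw [e4]
    refine (ContinuousMap.norm_le _ zero_le_one).mpr (fun y => ?_)
    set t : ℝ := (h y).re with htdef
    have hy : h y = ((t : ℝ) : ℂ) := Complex.ext (by simp [htdef]) (by simp [hhim y])
    have ht : |t| ≤ 1 := by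
      calc |t| ≤ ‖h y‖ := Complex.abs_re_le_norm _
      _ ≤ ‖h‖ := h.norm_coe_le_norm y
      _ ≤ 1 := hnorm1
    have hv : ((1 : C(Y,ℂ)) - h * h) y = (((1 - t * t : ℝ)) : ℂ) := by
      simp only [ContinuousMap.sub_apply, ContinuousMap.mul_apply, ContinuousMap.one_apply]
      rw [hy]; push_cast; ring
    rw [hv, Complex.norm_real]
    rw [Real.norm_eq_abs, abs_le]
    constructor <;> nlinarith [abs_le.mp ht]
  refine fun y => ⟨him y, ?_⟩
  have hyb : ‖((1 : C(Y, ℂ)) - ((r * r : ℚ) : ℂ) • S f) y‖ ≤ 1 :=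
    le_trans (ContinuousMap.norm_coe_le_norm _ y) key
  have hval : (((1 : C(Y, ℂ)) - ((r * r : ℚ) : ℂ) • S f) y).re
      = 1 - (r : ℝ) * (r : ℝ) * (S f y).re := by
    simp only [ContinuousMap.sub_apply, ContinuousMap.smul_apply, ContinuousMap.one_apply]
    rw [show (S f y) = (((S f y).re : ℝ) : ℂ) from Complex.ext (by simp) (by simp [him y])]
    push_cast
    simp [Complex.sub_re, Complex.mul_re]
  have habs : |1 - (r : ℝ) * (r : ℝ) * (S f y).re| ≤ 1 := by
    rw [← hval]
    exact le_trans (Complex.abs_re_le_norm _) hyb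
  have := (abs_le.mp habs).2
  nlinarith [mul_pos hr0 hr0]
end

section
/- Let S : C(X,ℂ) → C(Y,ℂ) be a bijective additive map with S(1) = 1, S(r•f) = r•S(f) for all rationals r, S(conj f) = conj(S f), and ‖S(fg)‖ = ‖S(f)S(g)‖ for all f, g. Then ‖S(|f|)‖ = ‖S(f)‖ for every f ∈ C(X,ℂ), where |f| denotes the pointwise modulus of f. -/
/-! The modulus `a = |f|` is self-adjoint with `a * a = f * star f`, so the C⋆-identity gives
`‖S a‖² = ‖S a * star (S a)‖ = ‖S (a * a)‖ = ‖S (f * star f)‖ = ‖S f * star (S f)‖ = ‖S f‖²`. -/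

theorem norm_map_eq_of_mul_self_eq_mul_star {A B : Type*} [Mul A] [Star A]
    [NonUnitalNormedRing B] [StarRing B] [CStarRing B] (S : A → B)
    (hstar : ∀ f : A, S (star f) = star (S f))
    (hnm : ∀ f g : A, ‖S (f * g)‖ = ‖S f * S g‖)
    {a f : A} (ha : star a = a) (h : a * a = f * star f) : ‖S a‖ = ‖S f‖ := by
  have hsq : ‖S a‖ * ‖S a‖ = ‖S f‖ * ‖S f‖ :=
    calc ‖S a‖ * ‖S a‖ = ‖S a * star (S a)‖ := CStarRing.norm_self_mul_star.symm
      _ = ‖S (a * a)‖ := by rw [hnm, ← hstar, ha]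
      _ = ‖S (f * star f)‖ := by rw [h]
      _ = ‖S f * star (S f)‖ := by rw [hnm, hstar]
      _ = ‖S f‖ * ‖S f‖ := CStarRing.norm_self_mul_star
  exact (mul_self_inj (norm_nonneg _) (norm_nonneg _)).mp hsq

section Modulus

variable {X : Type*} [TopologicalSpace X] (f : C(X, ℂ))

theorem ContinuousMap.star_ofReal_comp_norm_comp :
    star ((⟨Complex.ofReal, Complex.continuous_ofReal⟩ : C(ℝ, ℂ)).comp
      ((⟨fun z : ℂ => ‖z‖, continuous_norm⟩ : C(ℂ, ℝ)).comp f)) =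
    (⟨Complex.ofReal, Complex.continuous_ofReal⟩ : C(ℝ, ℂ)).comp
      ((⟨fun z : ℂ => ‖z‖, continuous_norm⟩ : C(ℂ, ℝ)).comp f) := by
  ext x
  simp

theorem ContinuousMap.ofReal_comp_norm_comp_mul_self :
    (⟨Complex.ofReal, Complex.continuous_ofReal⟩ : C(ℝ, ℂ)).comp
        ((⟨fun z : ℂ => ‖z‖, continuous_norm⟩ : C(ℂ, ℝ)).comp f) *
      (⟨Complex.ofReal, Complex.continuous_ofReal⟩ : C(ℝ, ℂ)).comp
        ((⟨fun z : ℂ => ‖z‖, continuous_norm⟩ : C(ℂ, ℝ)).comp f) =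
    f * star f := by
  ext x
  simp only [ContinuousMap.mul_apply, ContinuousMap.comp_apply, ContinuousMap.coe_mk,
    ContinuousMap.star_apply]
  rw [Complex.star_def, Complex.mul_conj, ← Complex.ofReal_mul, ← Complex.sq_norm, sq]

end Modulus

variable {X Y : Type*} [TopologicalSpace X] [CompactSpace X] [T2Space X]
  [TopologicalSpace Y] [CompactSpace Y] [T2Space Y]

theorem stmt9_general (S : C(X, ℂ) → C(Y, ℂ))
    (hstar : ∀ f : C(X, ℂ), S (star f) = star (S f))
    (hnm : ∀ f g : C(X, ℂ), ‖S (f * g)‖ = ‖S f * S g‖) :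
    ∀ f : C(X, ℂ),
      ‖S ((⟨Complex.ofReal, Complex.continuous_ofReal⟩ : C(ℝ, ℂ)).comp
          ((⟨fun z : ℂ => ‖z‖, continuous_norm⟩ : C(ℂ, ℝ)).comp f))‖ = ‖S f‖ := fun f =>
  norm_map_eq_of_mul_self_eq_mul_star S hstar hnm
    (ContinuousMap.star_ofReal_comp_norm_comp f) (ContinuousMap.ofReal_comp_norm_comp_mul_self f)

theorem stmt9 (S : C(X, ℂ) → C(Y, ℂ)) (hbij : Function.Bijective S)
    (hadd : ∀ f g : C(X, ℂ), S (f + g) = S f + S g)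
    (hone : S 1 = 1)
    (hq : ∀ (r : ℚ) (f : C(X, ℂ)), S ((r : ℂ) • f) = (r : ℂ) • S f)
    (hstar : ∀ f : C(X, ℂ), S (star f) = star (S f))
    (hnm : ∀ f g : C(X, ℂ), ‖S (f * g)‖ = ‖S f * S g‖) :
    ∀ f : C(X, ℂ),
      ‖S ((⟨Complex.ofReal, Complex.continuous_ofReal⟩ : C(ℝ, ℂ)).comp
          ((⟨fun z : ℂ => ‖z‖, continuous_norm⟩ : C(ℂ, ℝ)).comp f))‖ = ‖S f‖ :=
  stmt9_general S hstar hnm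
end

section
/- Let S : C(X,ℂ) → C(Y,ℂ) be a bijective additive map with S(1) = 1, S(r•f) = r•S(f) for all rationals r, S(conj f) = conj(S f), ‖S(fg)‖ = ‖S(f)S(g)‖ for all f, g, and suppose S maps nonnegative functions to nonnegative functions. Then ‖S(f)‖ ≤ ‖f‖ for all f ∈ C(X,ℂ). -/
/-!
Put `b := |f*|`, the continuous-functional-calculus absolute value of `star f`, so that
`b * b = f * star f`, `b` is self-adjoint and `‖b‖ = ‖f‖`. The C⋆-identity together with the
compatibility of `S` with `star` and with norms of products gives `‖S f‖² = ‖S (f f*)‖ = ‖S b‖²`.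
As `0 ≤ b ≤ r • 1` for every rational `r ≥ ‖f‖`, positivity and `ℚ`-linearity of `S` give
`0 ≤ S b ≤ r • 1`, i.e. `‖S b‖ ≤ r`.
-/

open scoped ComplexOrder

section CStarAlgebra

variable {A B : Type*} [CStarAlgebra A] [CStarAlgebra B]

lemma map_algebraMap_ratCast {S : A → B} (hone : S 1 = 1)
    (hq : ∀ (r : ℚ) (a : A), S ((r : ℂ) • a) = (r : ℂ) • S a) (r : ℚ) :
    S (algebraMap ℝ A r) = algebraMap ℝ B r := by
  simp only [Algebra.algebraMap_eq_smul_one, ← Complex.coe_smul, Complex.ofReal_ratCast, hq, hone]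

variable [PartialOrder A] [StarOrderedRing A]

lemma norm_map_eq_norm_map_abs_star {S : A → B} (hstar : ∀ a, S (star a) = star (S a))
    (hnm : ∀ a b, ‖S (a * b)‖ = ‖S a * S b‖) (a : A) :
    ‖S a‖ = ‖S (CFC.abs (star a))‖ := by
  set b := CFC.abs (star a)
  have hbb : b * b = a * star a := by rw [CFC.abs_mul_abs, star_star]
  have hb : star b = b := (CFC.abs_nonneg _).star_eq
  have hsq : ‖S a‖ * ‖S a‖ = ‖S b‖ * ‖S b‖ :=
    calc ‖S a‖ * ‖S a‖ = ‖S a * S (star a)‖ := by rw [hstar, CStarRing.norm_self_mul_star]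
      _ = ‖S b * S (star b)‖ := by rw [← hnm, ← hnm, ← hbb, hb]
      _ = ‖S b‖ * ‖S b‖ := by rw [hstar, CStarRing.norm_self_mul_star]
  exact (mul_self_inj (norm_nonneg _) (norm_nonneg _)).mp hsq

variable [PartialOrder B] [StarOrderedRing B]

lemma norm_map_le_norm_of_nonneg {S : A → B} (hadd : ∀ a b, S (a + b) = S a + S b)
    (hone : S 1 = 1) (hq : ∀ (r : ℚ) (a : A), S ((r : ℂ) • a) = (r : ℂ) • S a)
    (hpos : ∀ a, 0 ≤ a → 0 ≤ S a) {a : A} (ha : 0 ≤ a) : ‖S a‖ ≤ ‖a‖ := by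
  have hmono : Monotone S := (monotone_iff_map_nonneg (AddMonoidHom.mk' S hadd)).mpr hpos
  refine le_of_forall_lt_rat_imp_le fun r hr => ?_
  have hr0 : (0 : ℝ) ≤ r := (norm_nonneg a).trans hr.le
  have hle : a ≤ algebraMap ℝ A r := (CStarAlgebra.norm_le_iff_le_algebraMap a hr0 ha).mp hr.le
  rw [CStarAlgebra.norm_le_iff_le_algebraMap _ hr0 (hpos a ha),
    ← map_algebraMap_ratCast hone hq]
  exact hmono hle

end CStarAlgebra

lemma ContinuousMap.nonneg_iff_forall_im_eq_zero_and_re_nonneg {X : Type*} [TopologicalSpace X]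
    {f : C(X, ℂ)} :
    0 ≤ f ↔ ∀ x, (f x).im = 0 ∧ 0 ≤ (f x).re := by
  simp only [ContinuousMap.le_def, ContinuousMap.zero_apply, Complex.nonneg_iff, eq_comm, and_comm]

variable {X Y : Type*} [TopologicalSpace X] [CompactSpace X] [T2Space X]
  [TopologicalSpace Y] [CompactSpace Y] [T2Space Y]

theorem stmt10_general (S : C(X, ℂ) → C(Y, ℂ))
    (hadd : ∀ f g : C(X, ℂ), S (f + g) = S f + S g)
    (hone : S 1 = 1)
    (hq : ∀ (r : ℚ) (f : C(X, ℂ)), S ((r : ℂ) • f) = (r : ℂ) • S f)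
    (hstar : ∀ f : C(X, ℂ), S (star f) = star (S f))
    (hnm : ∀ f g : C(X, ℂ), ‖S (f * g)‖ = ‖S f * S g‖)
    (hpos : ∀ f : C(X, ℂ), (∀ x, (f x).im = 0 ∧ 0 ≤ (f x).re) →
      ∀ y, (S f y).im = 0 ∧ 0 ≤ (S f y).re) :
    ∀ f : C(X, ℂ), ‖S f‖ ≤ ‖f‖ := by
  have hpos' : ∀ f : C(X, ℂ), 0 ≤ f → 0 ≤ S f := by
    simpa only [ContinuousMap.nonneg_iff_forall_im_eq_zero_and_re_nonneg] using hpos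
  intro f
  calc ‖S f‖ = ‖S (CFC.abs (star f))‖ := norm_map_eq_norm_map_abs_star hstar hnm f
    _ ≤ ‖CFC.abs (star f)‖ := norm_map_le_norm_of_nonneg hadd hone hq hpos' (CFC.abs_nonneg _)
    _ = ‖f‖ := by rw [CFC.norm_abs, norm_star]

theorem stmt10 (S : C(X, ℂ) → C(Y, ℂ)) (hbij : Function.Bijective S)
    (hadd : ∀ f g : C(X, ℂ), S (f + g) = S f + S g)
    (hone : S 1 = 1)
    (hq : ∀ (r : ℚ) (f : C(X, ℂ)), S ((r : ℂ) • f) = (r : ℂ) • S f)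
    (hstar : ∀ f : C(X, ℂ), S (star f) = star (S f))
    (hnm : ∀ f g : C(X, ℂ), ‖S (f * g)‖ = ‖S f * S g‖)
    (hpos : ∀ f : C(X, ℂ), (∀ x, (f x).im = 0 ∧ 0 ≤ (f x).re) →
      ∀ y, (S f y).im = 0 ∧ 0 ≤ (S f y).re) :
    ∀ f : C(X, ℂ), ‖S f‖ ≤ ‖f‖ :=
  stmt10_general S hadd hone hq hstar hnm hpos
end

section
/- Let S : C(X,ℂ) → C(Y,ℂ) be a bijective, bounded real-linear map satisfying ‖S(f²)‖ = ‖S(f)²‖ for all f ∈ C(X,ℂ) and ‖S(f)‖ ≤ ‖f‖ for all f. Then ‖S(f)‖ = ‖f‖ for all f ∈ C(X,ℂ), i.e., S is an isometry. -/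
/-! By the open mapping theorem `S⁻¹` is bounded: `‖f‖ ≤ K * ‖S f‖`. Applied to `f ^ 2 ^ n`,
with `‖f ^ 2‖ = ‖f‖ ^ 2` in `C(X, ℂ)` and `‖S (f ^ 2)‖ ≤ ‖S f‖ ^ 2`, this improves to
`‖f‖ ^ 2 ^ n ≤ K * ‖S f‖ ^ 2 ^ n`, and taking `2 ^ n`-th roots as `n → ∞` gives `‖f‖ ≤ ‖S f‖`. -/

open scoped NNReal

theorem ContinuousMap.norm_pow_two {Z 𝕜 : Type*} [TopologicalSpace Z] [CompactSpace Z]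
    [NormedDivisionRing 𝕜] (f : C(Z, 𝕜)) : ‖f ^ 2‖ = ‖f‖ ^ 2 := by
  refine le_antisymm (norm_pow_le' f two_pos) ?_
  have h : ‖f‖ ≤ √‖f ^ 2‖ := (f.norm_le (by positivity)).2 fun x => by
    have hx := (f ^ 2).norm_coe_le_norm x
    rw [pow_apply, _root_.norm_pow] at hx
    exact Real.le_sqrt_of_sq_le hx
  calc ‖f‖ ^ 2 ≤ √‖f ^ 2‖ ^ 2 := by gcongr
    _ = ‖f ^ 2‖ := Real.sq_sqrt (norm_nonneg _)

theorem le_of_forall_pow_two_pow_le_mul {a b M : ℝ} (hb : 0 ≤ b)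
    (h : ∀ n : ℕ, a ^ 2 ^ n ≤ M * b ^ 2 ^ n) : a ≤ b := by
  by_contra! hba
  rcases hb.eq_or_lt with rfl | hb
  · linarith [show a ≤ 0 by simpa using h 0]
  have hr : 1 < a / b := (one_lt_div hb).2 hba
  obtain ⟨n, hn⟩ := pow_unbounded_of_one_lt M hr
  have hM : (a / b) ^ 2 ^ n ≤ M := by
    rw [div_pow, div_le_iff₀ (by positivity)]
    exact h n
  exact (hn.trans_le ((pow_le_pow_right₀ hr.le Nat.lt_two_pow_self.le).trans hM)).false

theorem norm_le_norm_of_le_mul_norm_of_norm_map_sq_le {A B : Type*} [SeminormedRing A]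
    [SeminormedAddCommGroup B] (S : A → B) {K : ℝ≥0} (hK : ∀ f, ‖f‖ ≤ K * ‖S f‖)
    (hA : ∀ f : A, ‖f‖ ^ 2 ≤ ‖f ^ 2‖) (hS : ∀ f, ‖S (f ^ 2)‖ ≤ ‖S f‖ ^ 2) (f : A) :
    ‖f‖ ≤ ‖S f‖ := by
  have key : ∀ n f, ‖f‖ ^ 2 ^ n ≤ K * ‖S f‖ ^ 2 ^ n := by
    intro n
    induction n with
    | zero => simpa using hK
    | succ n ih =>
      intro f
      calc ‖f‖ ^ 2 ^ (n + 1) = (‖f‖ ^ 2) ^ 2 ^ n := by rw [pow_succ' 2 n, pow_mul]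
        _ ≤ ‖f ^ 2‖ ^ 2 ^ n := by gcongr; exact hA f
        _ ≤ K * ‖S (f ^ 2)‖ ^ 2 ^ n := ih _
        _ ≤ K * (‖S f‖ ^ 2) ^ 2 ^ n := by gcongr; exact hS f
        _ = K * ‖S f‖ ^ 2 ^ (n + 1) := by rw [pow_succ' 2 n, pow_mul]
  exact le_of_forall_pow_two_pow_le_mul (norm_nonneg _) fun n => key n f

variable {X Y : Type*} [TopologicalSpace X] [CompactSpace X] [T2Space X]
  [TopologicalSpace Y] [CompactSpace Y] [T2Space Y]

theorem stmt12 (S : C(X, ℂ) → C(Y, ℂ)) (hbij : Function.Bijective S)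
    (hadd : ∀ f g : C(X, ℂ), S (f + g) = S f + S g)
    (hsmul : ∀ (c : ℝ) (f : C(X, ℂ)), S (c • f) = c • S f)
    (hsq : ∀ f : C(X, ℂ), ‖S (f ^ 2)‖ = ‖(S f) ^ 2‖)
    (hbd : ∀ f : C(X, ℂ), ‖S f‖ ≤ ‖f‖) :
    ∀ f : C(X, ℂ), ‖S f‖ = ‖f‖ := by
  let L : C(X, ℂ) →L[ℝ] C(Y, ℂ) :=
    LinearMap.mkContinuous { toFun := S, map_add' := hadd, map_smul' := hsmul } 1
      (by simpa using hbd)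
  obtain ⟨K, hK⟩ := L.antilipschitz_of_injective_of_isClosed_range hbij.1
    (hbij.2.range_eq ▸ isClosed_univ)
  intro f
  refine le_antisymm (hbd f) (norm_le_norm_of_le_mul_norm_of_norm_map_sq_le S
    (hK.le_mul_norm (map_zero L)) (fun f => (ContinuousMap.norm_pow_two f).ge) (fun f => ?_) f)
  rw [hsq]
  exact norm_pow_le' _ two_pos
end

section
/- Let T : C(X,ℂ) → C(Y,ℂ) be a bijective map between the sup-normed Banach algebras of continuous complex-valued functions on compact Hausdorff spaces X and Y, satisfying ‖T(f+g)‖ = ‖T(f)+T(g)‖, ‖T(fg)‖ = ‖T(f)T(g)‖, and T(conj f) = conj(T f) for all f, g. Then the map T₀ defined by T₀(f) = T(1)·T(f) is a surjective real-linear isometry from C(X,ℂ) onto C(Y,ℂ). -/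
/-!
Write `N f = ‖T f‖`. Norm-additivity gives `N (n • f) = n * N f`, and norm-multiplicativity with
the C⋆-identity gives `N (f * f⋆) = N f ^ 2`. A self-adjoint `u` with `‖u‖ ≤ 1` is the real part
of a unitary `w`, so `N u ≤ N w = N 1 ≤ 1`; by homogeneity and the C⋆-identity, `N f ≤ ‖f‖`.
Conversely `N` is a submultiplicative ring norm on `C(X, ℂ)`, complete because `T` is a bijection
onto a Banach space, so `1 - g` is invertible whenever `N g < 1`; for `g = f / f x` this forces
`‖f x‖ ≤ N f`. Thus `T` is an isometric bijection fixing `0`, real-linear by Mazur–Ulam, and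
`‖T 1 * h‖ = ‖h‖` for all `h` forces `|T 1| = 1`, so `T 1 * T 1 = 1` since `T 1` is real.
-/

open Function

section NormAdditive

variable {E F : Type*} [AddGroup E] [NormedAddCommGroup F] [NormedSpace ℝ F] {T : E → F}

theorem norm_add_self (x : F) : ‖x + x‖ = 2 * ‖x‖ := by
  rw [← two_smul ℝ x, norm_smul, Real.norm_two]

theorem map_zero_of_norm_map_add (hT : ∀ f g, ‖T (f + g)‖ = ‖T f + T g‖) : T 0 = 0 := by
  have h := hT 0 0
  rw [add_zero, norm_add_self] at h
  exact norm_eq_zero.mp (by linarith)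

theorem map_neg_of_norm_map_add (hT : ∀ f g, ‖T (f + g)‖ = ‖T f + T g‖) (f : E) :
    T (-f) = -T f := by
  have h := hT f (-f)
  rw [add_neg_cancel, map_zero_of_norm_map_add hT, norm_zero, eq_comm, norm_eq_zero] at h
  exact eq_neg_of_add_eq_zero_right h

theorem norm_map_sub_of_norm_map_add (hT : ∀ f g, ‖T (f + g)‖ = ‖T f + T g‖) (f g : E) :
    ‖T (f - g)‖ = ‖T f - T g‖ := by
  rw [sub_eq_add_neg, hT, map_neg_of_norm_map_add hT, ← sub_eq_add_neg]

theorem norm_map_nsmul_of_norm_map_add (hT : ∀ f g, ‖T (f + g)‖ = ‖T f + T g‖) (n : ℕ) (f : E) :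
    ‖T (n • f)‖ = n * ‖T f‖ := by
  induction n using Nat.twoStepInduction with
  | zero => simp [map_zero_of_norm_map_add hT]
  | one => simp
  | more k ih₀ ih₁ =>
    have upper : ‖T ((k + 2) • f)‖ ≤ (k + 2) * ‖T f‖ := by
      calc ‖T ((k + 2) • f)‖ = ‖T ((k + 1) • f) + T f‖ := by rw [← hT, ← succ_nsmul]
        _ ≤ ‖T ((k + 1) • f)‖ + ‖T f‖ := norm_add_le _ _
        _ = (k + 2) * ‖T f‖ := by rw [ih₁]; push_cast; ring
    -- doubling `(k + 1) • f` and splitting it as `(k + 2) • f + k • f` gives the reverse bound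
    have lower : 2 * ((k + 1) * ‖T f‖) ≤ ‖T ((k + 2) • f)‖ + k * ‖T f‖ := by
      calc 2 * ((k + 1) * ‖T f‖) = ‖T ((k + 1) • f) + T ((k + 1) • f)‖ := by
            rw [norm_add_self, ih₁]; push_cast; ring
        _ = ‖T ((k + 2) • f) + T (k • f)‖ := by rw [← hT, ← hT, ← add_nsmul, ← add_nsmul]; ring_nf
        _ ≤ ‖T ((k + 2) • f)‖ + k * ‖T f‖ := by rw [← ih₀]; exact norm_add_le _ _
    push_cast at upper lower ⊢
    linarith

end NormAdditive

section CStar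

theorem norm_map_mul_star {A B : Type*} [Mul A] [Star A] [NonUnitalNormedRing B] [StarRing B]
    [CStarRing B] {T : A → B} (hmul : ∀ f g, ‖T (f * g)‖ = ‖T f * T g‖)
    (hstar : ∀ f, T (star f) = star (T f)) (f : A) : ‖T (f * star f)‖ = ‖T f‖ ^ 2 := by
  rw [hmul, hstar, CStarRing.norm_self_mul_star, sq]

theorem norm_map_one_le_one {A B : Type*} [Monoid A] [StarMul A] [NonUnitalNormedRing B]
    [StarRing B] [CStarRing B] {T : A → B} (hmul : ∀ f g, ‖T (f * g)‖ = ‖T f * T g‖)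
    (hstar : ∀ f, T (star f) = star (T f)) : ‖T 1‖ ≤ 1 := by
  have h := norm_map_mul_star hmul hstar 1
  rw [star_one, one_mul] at h
  nlinarith [norm_nonneg (T 1)]

variable {A B : Type*} [CStarAlgebra A] [CStarAlgebra B] {T : A → B}

-- `u` is the real part of the unitary `w = u + i √(1 - u²)`, so `2 u = w + w⋆` while `w w⋆ = 1`.
theorem norm_map_le_norm_map_one_of_isSelfAdjoint [PartialOrder A] [StarOrderedRing A]
    (hadd : ∀ f g, ‖T (f + g)‖ = ‖T f + T g‖) (hmul : ∀ f g, ‖T (f * g)‖ = ‖T f * T g‖)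
    (hstar : ∀ f, T (star f) = star (T f)) {u : A} (hu : IsSelfAdjoint u) (hu_le : ‖u‖ ≤ 1) :
    ‖T u‖ ≤ ‖T 1‖ := by
  set w := selfAdjoint.unitarySelfAddISMul ⟨u, hu⟩ hu_le
  have hw_add : (w : A) + star (w : A) = u + u := by
    have h : (2⁻¹ : ℝ) • ((w : A) + star (w : A)) = u := by
      rw [← realPart_apply_coe]
      exact congrArg Subtype.val (selfAdjoint.realPart_unitarySelfAddISMul ⟨u, hu⟩ hu_le)
    rw [← two_smul ℝ u, ← h, smul_inv_smul₀ two_ne_zero]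
  have hTw : ‖T w‖ = ‖T 1‖ := by
    have h := norm_map_mul_star hmul hstar (w : A)
    have h1 := norm_map_mul_star hmul hstar (1 : A)
    rw [Unitary.mul_star_self_of_mem w.2] at h
    rw [star_one, one_mul] at h1
    exact (pow_left_inj₀ (norm_nonneg _) (norm_nonneg _) two_ne_zero).mp (h.symm.trans h1)
  have h2u : 2 * ‖T u‖ ≤ 2 * ‖T w‖ := by
    calc 2 * ‖T u‖ = ‖T (u + u)‖ := by rw [hadd, norm_add_self]
      _ = ‖T w + star (T w)‖ := by rw [← hw_add, hadd, hstar]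
      _ ≤ 2 * ‖T w‖ := (norm_add_le _ _).trans_eq (by rw [norm_star]; ring)
  linarith

theorem norm_map_le_of_isSelfAdjoint [PartialOrder A] [StarOrderedRing A]
    (hadd : ∀ f g, ‖T (f + g)‖ = ‖T f + T g‖) (hmul : ∀ f g, ‖T (f * g)‖ = ‖T f * T g‖)
    (hstar : ∀ f, T (star f) = star (T f)) {u : A} (hu : IsSelfAdjoint u) : ‖T u‖ ≤ ‖u‖ := by
  -- write `n • u = m • v` with `‖v‖ ≤ 1` and `m = ⌊n ‖u‖⌋ + 1`, then let `n → ∞`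
  have approx : ∀ n : ℕ, 0 < n → n * ‖T u‖ ≤ n * ‖u‖ + 1 := by
    intro n hn
    set m : ℕ := ⌊n * ‖u‖⌋₊ + 1
    have hm : (n : ℝ) * ‖u‖ < m := by simpa [m] using Nat.lt_floor_add_one ((n : ℝ) * ‖u‖)
    have hm_pos : (0 : ℝ) < m := by positivity
    set v : A := ((n : ℝ) / m) • u
    have hv_le : ‖v‖ ≤ 1 := by
      rw [norm_smul, Real.norm_of_nonneg (by positivity), div_mul_eq_mul_div,
        div_le_one hm_pos]
      exact hm.le
    have hmv : m • v = n • u := by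
      rw [← Nat.cast_smul_eq_nsmul ℝ, ← Nat.cast_smul_eq_nsmul ℝ, smul_smul,
        mul_div_cancel₀ _ hm_pos.ne']
    calc n * ‖T u‖ = m * ‖T v‖ := by
          rw [← norm_map_nsmul_of_norm_map_add hadd, ← norm_map_nsmul_of_norm_map_add hadd, hmv]
      _ ≤ m * 1 := by
          gcongr
          exact (norm_map_le_norm_map_one_of_isSelfAdjoint hadd hmul hstar
            ((IsSelfAdjoint.all _).smul hu) hv_le).trans (norm_map_one_le_one hmul hstar)
      _ ≤ n * ‖u‖ + 1 := by simpa [m] using Nat.floor_le (by positivity : 0 ≤ (n : ℝ) * ‖u‖)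
  refine le_of_forall_pos_lt_add fun ε hε => ?_
  obtain ⟨n, hn⟩ := exists_nat_one_div_lt hε
  have h := approx (n + 1) n.succ_pos
  push_cast at h
  rw [div_lt_iff₀ (by positivity)] at hn
  nlinarith

theorem norm_map_le_norm [PartialOrder A] [StarOrderedRing A]
    (hadd : ∀ f g, ‖T (f + g)‖ = ‖T f + T g‖) (hmul : ∀ f g, ‖T (f * g)‖ = ‖T f * T g‖)
    (hstar : ∀ f, T (star f) = star (T f)) (f : A) : ‖T f‖ ≤ ‖f‖ := by
  have h := norm_map_le_of_isSelfAdjoint hadd hmul hstar (IsSelfAdjoint.mul_star_self f)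
  rw [norm_map_mul_star hmul hstar, CStarRing.norm_self_mul_star, ← sq] at h
  exact (pow_le_pow_iff_left₀ (norm_nonneg _) (norm_nonneg _) two_ne_zero).mp h

end CStar

section Neumann

variable {R F : Type*} [Ring R] [NormedAddCommGroup F] [NormedSpace ℝ F] {T : R → F}

def pullbackRingNorm (hinj : Injective T) (hadd : ∀ f g, ‖T (f + g)‖ = ‖T f + T g‖)
    (hmul : ∀ f g, ‖T (f * g)‖ ≤ ‖T f‖ * ‖T g‖) : RingNorm R where
  toFun f := ‖T f‖
  map_zero' := by rw [map_zero_of_norm_map_add hadd, norm_zero]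
  add_le' f g := (hadd f g).trans_le (norm_add_le _ _)
  neg' f := by rw [map_neg_of_norm_map_add hadd, norm_neg]
  mul_le' := hmul
  eq_zero_of_map_eq_zero' f hf :=
    hinj <| by rw [map_zero_of_norm_map_add hadd]; exact norm_eq_zero.mp hf

theorem isUnit_one_sub_of_norm_map_lt_one [CompleteSpace F] (hbij : Bijective T)
    (hadd : ∀ f g, ‖T (f + g)‖ = ‖T f + T g‖) (hmul : ∀ f g, ‖T (f * g)‖ ≤ ‖T f‖ * ‖T g‖)
    {g : R} (hg : ‖T g‖ < 1) : IsUnit (1 - g) := by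
  let : NormedRing R := (pullbackRingNorm hbij.injective hadd hmul).toNormedRing
  have hiso : Isometry T := Isometry.of_dist_eq fun f g => by
    rw [dist_eq_norm, dist_eq_norm, ← norm_map_sub_of_norm_map_add hadd]
    rfl
  have : CompleteSpace R := (IsometryEquiv.mk (Equiv.ofBijective T hbij) hiso).completeSpace
  exact (Units.oneSub g hg).isUnit

end Neumann

section ContinuousFunctions

open scoped ComplexOrder

variable {X B : Type*} [TopologicalSpace X] [CompactSpace X] [CStarAlgebra B] {T : C(X, ℂ) → B}

theorem norm_apply_le_norm_map (hbij : Bijective T) (hadd : ∀ f g, ‖T (f + g)‖ = ‖T f + T g‖)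
    (hmul : ∀ f g, ‖T (f * g)‖ = ‖T f * T g‖) (hstar : ∀ f, T (star f) = star (T f))
    (f : C(X, ℂ)) (x : X) : ‖f x‖ ≤ ‖T f‖ := by
  by_contra! hlt
  have hfx : f x ≠ 0 := norm_pos_iff.mp ((norm_nonneg _).trans_lt hlt)
  set c := ContinuousMap.const X (f x)⁻¹
  have hc : ‖c‖ ≤ ‖f x‖⁻¹ :=
    (c.norm_le (by positivity)).2 fun _ => by rw [ContinuousMap.const_apply, norm_inv]
  have hmul_le : ∀ f g, ‖T (f * g)‖ ≤ ‖T f‖ * ‖T g‖ := fun f g =>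
    (hmul f g).trans_le (norm_mul_le _ _)
  have hlt_one : ‖T (c * f)‖ < 1 :=
    calc ‖T (c * f)‖ ≤ ‖T c‖ * ‖T f‖ := hmul_le c f
      _ ≤ ‖f x‖⁻¹ * ‖T f‖ := by gcongr; exact (norm_map_le_norm hadd hmul hstar c).trans hc
      _ < 1 := by rwa [inv_mul_lt_one₀ (norm_pos_iff.mpr hfx)]
  have hunit := isUnit_one_sub_of_norm_map_lt_one hbij hadd hmul_le hlt_one
  rw [ContinuousMap.isUnit_iff_forall_ne_zero] at hunit
  exact hunit x (by simp [c, hfx])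

theorem norm_map_eq_norm (hbij : Bijective T) (hadd : ∀ f g, ‖T (f + g)‖ = ‖T f + T g‖)
    (hmul : ∀ f g, ‖T (f * g)‖ = ‖T f * T g‖) (hstar : ∀ f, T (star f) = star (T f))
    (f : C(X, ℂ)) : ‖T f‖ = ‖f‖ :=
  le_antisymm (norm_map_le_norm hadd hmul hstar f)
    ((f.norm_le (norm_nonneg _)).2 (norm_apply_le_norm_map hbij hadd hmul hstar f))

theorem isometry_of_norm_map (hbij : Bijective T) (hadd : ∀ f g, ‖T (f + g)‖ = ‖T f + T g‖)
    (hmul : ∀ f g, ‖T (f * g)‖ = ‖T f * T g‖) (hstar : ∀ f, T (star f) = star (T f)) :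
    Isometry T := Isometry.of_dist_eq fun f g => by
  rw [dist_eq_norm, dist_eq_norm, ← norm_map_sub_of_norm_map_add hadd,
    norm_map_eq_norm hbij hadd hmul hstar]

end ContinuousFunctions

namespace ContinuousMap

variable {Y : Type*} [TopologicalSpace Y] [CompactSpace Y] [T2Space Y]

-- test against an Urysohn bump at `y` supported where `‖a‖ < r`
theorem one_le_norm_apply_of_forall_norm_le_norm_mul {a : C(Y, ℂ)}
    (ha : ∀ h : C(Y, ℂ), ‖h‖ ≤ ‖a * h‖) (y : Y) : 1 ≤ ‖a y‖ := by
  by_contra! hlt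
  obtain ⟨r, hyr, hr⟩ := exists_between hlt
  have hU : IsOpen {v | ‖a v‖ < r} := isOpen_lt (by fun_prop) continuous_const
  obtain ⟨k, hk0, hk1, hk01⟩ := exists_continuous_zero_one_of_isClosed hU.isClosed_compl
    isClosed_singleton (Set.disjoint_singleton_right.mpr fun hy => hy hyr)
  let h : C(Y, ℂ) := ⟨fun v => (k v : ℂ), by fun_prop⟩
  have hh : 1 ≤ ‖h‖ := by
    simpa [h, hk1 rfl] using h.norm_coe_le_norm y
  have hah : ‖a * h‖ ≤ r := by
    refine ((a * h).norm_le ((norm_nonneg _).trans hyr.le)).2 fun v => ?_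
    rw [mul_apply, norm_mul]
    by_cases hv : ‖a v‖ < r
    · have hkv : ‖h v‖ ≤ 1 := by simpa [h, abs_of_nonneg (hk01 v).1] using (hk01 v).2
      nlinarith [norm_nonneg (a v), norm_nonneg (h v)]
    · have hkv : h v = 0 := by simp [h, hk0 hv]
      rw [hkv, norm_zero, mul_zero]
      exact (norm_nonneg _).trans hyr.le
  linarith [ha h]

theorem star_mul_self_eq_one_of_forall_norm_mul_eq {a : C(Y, ℂ)}
    (ha : ∀ h : C(Y, ℂ), ‖a * h‖ = ‖h‖) : star a * a = 1 := by
  ext y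
  have hle : ‖a y‖ ≤ 1 := by
    calc ‖a y‖ ≤ ‖a * 1‖ := by simpa using a.norm_coe_le_norm y
      _ = ‖(1 : C(Y, ℂ))‖ := ha 1
      _ ≤ 1 := ((1 : C(Y, ℂ)).norm_le zero_le_one).2 fun _ => by simp
  have hge := one_le_norm_apply_of_forall_norm_le_norm_mul (fun h => (ha h).ge) y
  rw [mul_apply, star_apply, one_apply, Complex.star_def, Complex.conj_mul',
    le_antisymm hle hge]
  norm_num

end ContinuousMap

variable {X Y : Type*} [TopologicalSpace X] [CompactSpace X] [T2Space X]
  [TopologicalSpace Y] [CompactSpace Y] [T2Space Y]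

theorem stmt14 (T : C(X, ℂ) → C(Y, ℂ)) (hbij : Function.Bijective T)
    (h1 : ∀ f g : C(X, ℂ), ‖T (f + g)‖ = ‖T f + T g‖)
    (h2 : ∀ f g : C(X, ℂ), ‖T (f * g)‖ = ‖T f * T g‖)
    (h3 : ∀ f : C(X, ℂ), T (star f) = star (T f)) :
    Function.Surjective (fun f => T 1 * T f : C(X, ℂ) → C(Y, ℂ)) ∧
    (∀ f g : C(X, ℂ), T 1 * T (f + g) = T 1 * T f + T 1 * T g) ∧
    (∀ (c : ℝ) (f : C(X, ℂ)), T 1 * T (c • f) = c • (T 1 * T f)) ∧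
    (∀ f : C(X, ℂ), ‖T 1 * T f‖ = ‖f‖) := by
  have hT1 : T 1 * T 1 = 1 := by
    have hmul_one : ∀ h, ‖T 1 * h‖ = ‖h‖ := fun h => by
      obtain ⟨g, rfl⟩ := hbij.2 h
      rw [← h2, one_mul]
    rw [← ContinuousMap.star_mul_self_eq_one_of_forall_norm_mul_eq hmul_one, ← h3, star_one]
  obtain ⟨L, rfl⟩ : ∃ L : C(X, ℂ) ≃ₗᵢ[ℝ] C(Y, ℂ), ⇑L = T :=
    let e : C(X, ℂ) ≃ᵢ C(Y, ℂ) := ⟨.ofBijective T hbij, isometry_of_norm_map hbij h1 h2 h3⟩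
    ⟨e.toRealLinearIsometryEquivOfMapZero (map_zero_of_norm_map_add h1),
      e.coe_toRealLinearIsometryEquivOfMapZero _⟩
  refine ⟨fun h => ⟨L.symm (L 1 * h), ?_⟩, fun f g => ?_, fun c f => ?_, fun f => ?_⟩
  · simp only [L.apply_symm_apply, ← mul_assoc, hT1, one_mul]
  · rw [map_add, mul_add]
  · rw [map_smul, mul_smul_comm]
  · rw [← h2, one_mul, L.norm_map]
end

section
/- Let S : C(X,ℂ) → C(Y,ℂ) be a surjective real-linear isometry with S(1) = 1 (for X, Y compact Hausdorff). Then there exist a homeomorphism τ : Y → X and a clopen set K ⊆ Y such that S(f)(y) = f(τ(y)) for y ∈ K and S(f)(y) = conj(f(τ(y))) for y ∈ Y \ K, for all f ∈ C(X,ℂ). -/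
/-!
Write `e` for `S` viewed as a real-linear isometric isomorphism `C(X, ℂ) ≃ C(Y, ℂ)`.

Extreme points of the unit ball of `C(X, ℂ)` are exactly the unimodular functions, and `e`
preserves extreme points, so `e i` is unimodular. Whenever `f` and `w` are pointwise orthogonal
with `|w| ≤ 1`, we have `‖f + t w‖² ≤ ‖f‖² + t²` for all real `t`. Applying this through `e`
with `w = 1` shows that `e` maps imaginary functions to imaginary ones, so `e i = ±i` pointwise.
Applying it with `w = i` then shows that `e` maps real functions to real ones.

On real functions `e` is a unital isometric isomorphism `C(X, ℝ) ≃ C(Y, ℝ)`. Such a map is an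
order isomorphism, because `0 ≤ c ↔ ‖c - ‖c‖‖ ≤ ‖c‖`, so it commutes with `|·|`. A unital
functional that commutes with `|·|` is a point evaluation (by compactness), which gives the
homeomorphism `τ`. A peak-function estimate at `τ y` gives `e (i g) y = g (τ y) · (e i) y`, and
`K = {y | (e i) y = i}`.
-/

open ContinuousMap Complex Set Metric ComplexConjugate

section Separation
variable {Z : Type*} [TopologicalSpace Z] [CompletelyRegularSpace Z]

theorem exists_continuous_one_zero_of_mem_isOpen {U : Set Z} (hU : IsOpen U) {z : Z}
    (hz : z ∈ U) :
    ∃ φ : C(Z, ℝ), φ z = 1 ∧ (∀ x ∉ U, φ x = 0) ∧ ∀ x, φ x ∈ Icc (0 : ℝ) 1 := by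
  obtain ⟨f, hf, hfz, hfU⟩ := CompletelyRegularSpace.completely_regular_isOpen z U hU hz
  refine ⟨⟨fun x ↦ 1 - f x, by fun_prop⟩, by simp [hfz], fun x hx ↦ ?_, fun x ↦ ?_⟩
  · simp [hfU hx]
  · simp [(f x).2.1, (f x).2.2]

theorem continuous_of_forall_continuous_comp {W : Type*} [TopologicalSpace W] {τ : W → Z}
    (h : ∀ g : C(Z, ℝ), Continuous (g ∘ τ)) : Continuous τ := by
  refine continuous_def.mpr fun U hU ↦ isOpen_iff_forall_mem_open.mpr fun w hw ↦ ?_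
  obtain ⟨φ, hφ1, hφ0, -⟩ := exists_continuous_one_zero_of_mem_isOpen hU hw
  refine ⟨{w' | 0 < φ (τ w')}, fun w' hw' ↦ ?_, isOpen_lt continuous_const (h φ), by simp [hφ1]⟩
  by_contra hU'
  simp [hφ0 _ hU'] at hw'

theorem eq_of_forall_continuousMap_apply_eq [T1Space Z] {z z' : Z}
    (h : ∀ g : C(Z, ℝ), g z = g z') : z = z' := by
  by_contra hne
  obtain ⟨φ, hφ1, hφ0, -⟩ := exists_continuous_one_zero_of_mem_isOpen isOpen_compl_singleton hne
  simpa [hφ1, hφ0 z' (by simp)] using h φ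

end Separation

section PointEvaluation
variable {X : Type*} [TopologicalSpace X] [CompactSpace X]

theorem exists_apply_le_of_map_abs (φ : C(X, ℝ) →ₗ[ℝ] ℝ) (hone : φ 1 = 1)
    (habs : ∀ a, φ |a| = |φ a|) (a : C(X, ℝ)) : ∃ x, a x ≤ φ a := by
  have : Nonempty X := by
    by_contra hX
    have : Subsingleton C(X, ℝ) := ⟨fun f g ↦ ext fun x ↦ (hX ⟨x⟩).elim⟩
    simp [Subsingleton.elim (1 : C(X, ℝ)) 0] at hone
  obtain ⟨x, -, hx⟩ := isCompact_univ.exists_isMinOn univ_nonempty a.continuous.continuousOn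
  have hnonneg : 0 ≤ a - a x • 1 := fun x' ↦ by simpa using hx (mem_univ x')
  have h0 : 0 ≤ φ (a - a x • 1) := by
    rw [← abs_of_nonneg hnonneg, habs]
    exact abs_nonneg _
  exact ⟨x, by simpa [hone] using h0⟩

theorem exists_apply_eq_of_map_abs (φ : C(X, ℝ) →ₗ[ℝ] ℝ) (hone : φ 1 = 1)
    (habs : ∀ a, φ |a| = |φ a|) : ∃ x, ∀ a, φ a = a x := by
  simpa [Set.nonempty_iInter, eq_comm] using CompactSpace.iInter_nonempty
    (t := fun a : C(X, ℝ) ↦ {x | a x = φ a}) (fun a ↦ isClosed_eq a.continuous continuous_const)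
    fun s ↦ by
      obtain ⟨x, hx⟩ := exists_apply_le_of_map_abs φ hone habs (∑ a ∈ s, |a - φ a • 1|)
      have hsum : ∑ b ∈ s, |b x - φ b| = 0 := by
        refine le_antisymm ?_ (Finset.sum_nonneg fun _ _ ↦ abs_nonneg _)
        simpa [map_sum, habs, hone] using hx
      refine ⟨x, mem_iInter₂.mpr fun a ha ↦ ?_⟩
      simpa [sub_eq_zero] using
        (Finset.sum_eq_zero_iff_of_nonneg fun _ _ ↦ abs_nonneg _).mp hsum a ha

end PointEvaluation

section RealBanachStone
variable {X Y : Type*} [TopologicalSpace X] [CompactSpace X] [TopologicalSpace Y] [CompactSpace Y]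

theorem ContinuousMap.nonneg_iff_norm_sub_le (c : C(X, ℝ)) : 0 ≤ c ↔ ‖c - ‖c‖ • 1‖ ≤ ‖c‖ := by
  rw [ContinuousMap.norm_le _ (norm_nonneg c), ContinuousMap.le_def]
  refine forall_congr' fun x ↦ ?_
  have := (abs_le.mp (c.norm_coe_le_norm x)).2
  simp only [zero_apply, sub_apply, smul_apply, one_apply, smul_eq_mul, mul_one, Real.norm_eq_abs,
    abs_le]
  exact ⟨fun h ↦ ⟨by linarith, by linarith⟩, fun h ↦ by linarith [h.1]⟩

theorem LinearIsometry.map_nonneg_iff_of_map_one (e : C(X, ℝ) →ₗᵢ[ℝ] C(Y, ℝ)) (he : e 1 = 1)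
    {c : C(X, ℝ)} : 0 ≤ e c ↔ 0 ≤ c := by
  rw [nonneg_iff_norm_sub_le, nonneg_iff_norm_sub_le, e.norm_map, ← he, ← e.map_smul, ← e.map_sub,
    e.norm_map]

noncomputable def LinearIsometry.toOrderEmbedding (e : C(X, ℝ) →ₗᵢ[ℝ] C(Y, ℝ)) (he : e 1 = 1) :
    C(X, ℝ) ↪o C(Y, ℝ) :=
  OrderEmbedding.ofMapLEIff e fun a b ↦ by
    rw [← sub_nonneg, ← e.map_sub, e.map_nonneg_iff_of_map_one he, sub_nonneg]

theorem LinearIsometryEquiv.map_abs_of_map_one (e : C(X, ℝ) ≃ₗᵢ[ℝ] C(Y, ℝ)) (he : e 1 = 1)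
    (a : C(X, ℝ)) : e |a| = |e a| := by
  let o := OrderIso.ofSurjective (e.toLinearIsometry.toOrderEmbedding he) e.surjective
  show o (a ⊔ -a) = o a ⊔ -o a
  rw [o.map_sup]
  simp [o, LinearIsometry.toOrderEmbedding]

theorem LinearIsometryEquiv.exists_apply_eq_apply_of_map_one (e : C(X, ℝ) ≃ₗᵢ[ℝ] C(Y, ℝ))
    (he : e 1 = 1) (y : Y) : ∃ x, ∀ g, e g y = g x :=
  exists_apply_eq_of_map_abs ((ContinuousMap.evalCLM ℝ y).toLinearMap ∘ₗ e.toLinearMap)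
    (by simp [he]) fun a ↦ by simp [e.map_abs_of_map_one he]

variable [T2Space X] [T2Space Y]

theorem LinearIsometryEquiv.exists_homeomorph_of_map_one (e : C(X, ℝ) ≃ₗᵢ[ℝ] C(Y, ℝ))
    (he : e 1 = 1) : ∃ τ : Y ≃ₜ X, ∀ g y, e g y = g (τ y) := by
  choose τ hτ using e.exists_apply_eq_apply_of_map_one he
  choose σ hσ using e.symm.exists_apply_eq_apply_of_map_one (e.symm_apply_eq.mpr he.symm)
  refine ⟨⟨⟨τ, σ, fun y ↦ ?_, fun x ↦ ?_⟩, ?_, ?_⟩, fun g y ↦ hτ y g⟩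
  · exact eq_of_forall_continuousMap_apply_eq fun k ↦ by
      rw [← hσ, ← hτ, e.apply_symm_apply]
  · exact eq_of_forall_continuousMap_apply_eq fun g ↦ by
      rw [← hτ, ← hσ, e.symm_apply_apply]
  · exact continuous_of_forall_continuous_comp fun g ↦ by
      simpa [Function.comp_def, ← hτ] using (e g).continuous
  · exact continuous_of_forall_continuous_comp fun g ↦ by
      simpa [Function.comp_def, ← hσ] using (e.symm g).continuous

end RealBanachStone

section ExtremePoints
variable {X Y E F : Type*} [TopologicalSpace X] [CompactSpace X] [TopologicalSpace Y]
  [CompactSpace Y] [NormedAddCommGroup E] [NormedSpace ℝ E] [NormedAddCommGroup F]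
  [NormedSpace ℝ F]

theorem ContinuousMap.mem_extremePoints_closedBall [StrictConvexSpace ℝ E] {u : C(X, E)}
    (hu : ∀ x, ‖u x‖ = 1) : u ∈ extremePoints ℝ (closedBall 0 1) := by
  have hball {v : C(X, E)} : v ∈ closedBall 0 1 ↔ ∀ x, v x ∈ closedBall 0 1 := by
    simp [ContinuousMap.norm_le _ zero_le_one]
  refine mem_extremePoints_iff_left.mpr ⟨hball.mpr fun x ↦ by simp [hu x], ?_⟩
  rintro v hv w hw ⟨a, b, ha, hb, hab, rfl⟩
  ext x
  exact (mem_extremePoints_iff_left.mp (StrictConvexSpace.sphere_subset_extremePoints_closedBall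
    0 one_ne_zero (by simpa using hu x))).2 _ (hball.mp hv x) _ (hball.mp hw x)
    ⟨a, b, ha, hb, hab, rfl⟩

theorem ContinuousMap.norm_apply_eq_one_of_mem_extremePoints [CompletelyRegularSpace X]
    [Nontrivial E] {u : C(X, E)} (hu : u ∈ extremePoints ℝ (closedBall 0 1)) (x₀ : X) :
    ‖u x₀‖ = 1 := by
  have hle : ∀ x, ‖u x‖ ≤ 1 := fun x ↦ (u.norm_coe_le_norm x).trans (by simpa using hu.1)
  by_contra hne
  set ε := (1 - ‖u x₀‖) / 2
  have hlt : ‖u x₀‖ < 1 := (hle x₀).lt_of_ne hne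
  have hε : 0 < ε := by simp only [ε]; linarith
  obtain ⟨φ, hφ1, hφ0, hφ⟩ := exists_continuous_one_zero_of_mem_isOpen
    (isOpen_lt (by fun_prop) continuous_const)
    (show x₀ ∈ {x | ‖u x‖ < 1 - ε} by simp only [mem_ofPred_eq, ε]; linarith)
  obtain ⟨v, hv⟩ := exists_norm_eq E zero_le_one
  set h : C(X, E) := ε • (φ • ContinuousMap.const X v)
  have hmem (s : ℝ) (hs : |s| = 1) : u + s • h ∈ closedBall 0 1 := by
    simp only [mem_closedBall_zero_iff, ContinuousMap.norm_le _ zero_le_one]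
    intro x
    by_cases hx : ‖u x‖ < 1 - ε
    · calc ‖(u + s • h) x‖ ≤ ‖u x‖ + ε * φ x := by
            simpa [h, norm_smul, hs, hv, abs_of_nonneg (hφ x).1, abs_of_pos hε] using
              norm_add_le (u x) (s • h x)
        _ ≤ 1 := by nlinarith [(hφ x).2]
    · simpa [h, hφ0 x hx] using hle x
  have hmid : u ∈ openSegment ℝ (u + (1 : ℝ) • h) (u + (-1 : ℝ) • h) := by
    clear_value h
    exact ⟨1 / 2, 1 / 2, by norm_num, by norm_num, by norm_num, by module⟩
  have := congr($((mem_extremePoints_iff_left.mp hu).2 _ (hmem 1 (by simp)) _ (hmem (-1) (by simp))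
    hmid) x₀)
  simp only [h, one_smul, add_apply, coe_smul, coe_smul', coe_const, Pi.smul_apply,
    Pi.smul_apply', hφ1, Function.const_apply, add_eq_left, smul_eq_zero] at this
  exact this.elim hε.ne' fun hv0 ↦ by simp [hv0] at hv

theorem LinearIsometryEquiv.norm_map_apply_eq_one [StrictConvexSpace ℝ E] [Nontrivial F]
    [CompletelyRegularSpace Y] (e : C(X, E) ≃ₗᵢ[ℝ] C(Y, F)) {u : C(X, E)}
    (hu : ∀ x, ‖u x‖ = 1) (y : Y) : ‖e u y‖ = 1 := by
  refine norm_apply_eq_one_of_mem_extremePoints ?_ y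
  rw [← e.map_zero, ← e.image_closedBall, ← image_extremePoints e]
  exact mem_image_of_mem e (mem_extremePoints_closedBall hu)

end ExtremePoints

theorem Complex.sq_norm_add_ofReal_mul (z w : ℂ) (t : ℝ) :
    ‖z + t * w‖ ^ 2 = ‖z‖ ^ 2 + 2 * t * (z * conj w).re + t ^ 2 * ‖w‖ ^ 2 := by
  simp only [Complex.sq_norm, normSq_add, normSq_ofReal, map_mul, conj_ofReal,
    mul_left_comm z, re_ofReal_mul]
  ring

theorem Complex.re_mul_conj_eq_zero_of_forall {z w : ℂ} {C : ℝ} (hw : ‖w‖ = 1)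
    (h : ∀ t : ℝ, ‖z + t * w‖ ^ 2 ≤ C + t ^ 2) : (z * conj w).re = 0 := by
  have hlin (t : ℝ) : t * (2 * (z * conj w).re) ≤ C - ‖z‖ ^ 2 := by
    have := h t
    rw [sq_norm_add_ofReal_mul, hw] at this
    linarith
  by_contra hne
  have := hlin ((C - ‖z‖ ^ 2 + 1) / (2 * (z * conj w).re))
  rw [div_mul_cancel₀ _ (by simpa using hne)] at this
  linarith

section Orthogonal
variable {X Y : Type*} [TopologicalSpace X] [CompactSpace X] [TopologicalSpace Y] [CompactSpace Y]

theorem ContinuousMap.sq_norm_le_iff {E : Type*} [SeminormedAddCommGroup E] (f : C(X, E)) {M : ℝ}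
    (hM : 0 ≤ M) : ‖f‖ ^ 2 ≤ M ↔ ∀ x, ‖f x‖ ^ 2 ≤ M := by
  simp only [← Real.le_sqrt (norm_nonneg _) hM, ContinuousMap.norm_le _ (Real.sqrt_nonneg M)]

theorem ContinuousMap.sq_norm_add_smul_le {f w : C(X, ℂ)} (hw : ∀ x, ‖w x‖ ≤ 1)
    (hfw : ∀ x, (f x * conj (w x)).re = 0) (t : ℝ) : ‖f + t • w‖ ^ 2 ≤ ‖f‖ ^ 2 + t ^ 2 := by
  refine (sq_norm_le_iff _ (by positivity)).mpr fun x ↦ ?_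
  have hf := pow_le_pow_left₀ (norm_nonneg _) (f.norm_coe_le_norm x) 2
  have hw := pow_le_pow_left₀ (norm_nonneg _) (hw x) 2
  rw [add_apply, smul_apply, real_smul, sq_norm_add_ofReal_mul, hfw x]
  nlinarith [sq_nonneg t]

theorem LinearIsometry.re_mul_conj_eq_zero (e : C(X, ℂ) →ₗᵢ[ℝ] C(Y, ℂ)) {f w : C(X, ℂ)}
    (hw : ∀ x, ‖w x‖ ≤ 1) (hfw : ∀ x, (f x * conj (w x)).re = 0) {y : Y} (hy : ‖e w y‖ = 1) :
    (e f y * conj (e w y)).re = 0 :=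
  re_mul_conj_eq_zero_of_forall hy fun t ↦ calc
    ‖e f y + t * e w y‖ ^ 2 = ‖e (f + t • w) y‖ ^ 2 := by simp [real_smul]
    _ ≤ ‖f + t • w‖ ^ 2 := by
      rw [← e.norm_map]
      exact pow_le_pow_left₀ (norm_nonneg _) ((e _).norm_coe_le_norm y) 2
    _ ≤ ‖f‖ ^ 2 + t ^ 2 := sq_norm_add_smul_le hw hfw t

theorem LinearIsometry.re_map_apply_eq_zero (e : C(X, ℂ) →ₗᵢ[ℝ] C(Y, ℂ)) (he : e 1 = 1)
    {f : C(X, ℂ)} (hf : ∀ x, (f x).re = 0) (y : Y) : (e f y).re = 0 := by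
  simpa [he] using e.re_mul_conj_eq_zero (w := 1) (by simp) (by simpa using hf) (by simp [he])

end Orthogonal

section ToComplex
variable {X : Type*} [TopologicalSpace X]

noncomputable def ContinuousMap.toComplex : C(X, ℝ) →L[ℝ] C(X, ℂ) :=
  ofRealCLM.compLeftContinuous ℝ X

@[simp] theorem ContinuousMap.toComplex_apply (g : C(X, ℝ)) (x : X) : toComplex g x = g x := rfl

theorem ContinuousMap.toComplex_injective : Function.Injective (toComplex : C(X, ℝ) → C(X, ℂ)) :=
  fun _ _ h ↦ ext fun x ↦ by simpa using congr($h x)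

end ToComplex

section Complex
variable {X Y : Type*} [TopologicalSpace X] [CompactSpace X] [TopologicalSpace Y] [CompactSpace Y]

theorem LinearIsometry.im_map_I_smul_apply_eq_zero [CompletelyRegularSpace X]
    (e : C(X, ℂ) →ₗᵢ[ℝ] C(Y, ℂ)) (he : e 1 = 1) {τ : Y → X}
    (hτ : ∀ g y, e (toComplex g) y = g (τ y)) {g : C(X, ℝ)} {y : Y} (hg : g (τ y) = 0) :
    (e (I • toComplex g) y).im = 0 := by
  set q := (e (I • toComplex g) y).im
  have hre : (e (I • toComplex g) y).re = 0 := e.re_map_apply_eq_zero he (by simp) y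
  suffices h : ∀ ε > 0, q ^ 2 ≤ 0 + ε from
    pow_eq_zero_iff two_ne_zero |>.mp (le_antisymm (le_of_forall_pos_le_add h) (sq_nonneg q))
  intro ε hε
  obtain ⟨φ, hφ1, hφ0, hφ⟩ := exists_continuous_one_zero_of_mem_isOpen
    (isOpen_lt (by fun_prop) continuous_const) (show τ y ∈ {x | g x ^ 2 < ε} by simp [hg, hε])
  set M := ‖g‖
  -- the real part of `w` peaks at `τ y`, where `g` is small
  set w := M • toComplex φ + I • toComplex g
  have hw : ‖w‖ ^ 2 ≤ M ^ 2 + ε := by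
    refine (sq_norm_le_iff _ (by positivity)).mpr fun x ↦ ?_
    have hgx : ‖g x‖ ^ 2 ≤ M ^ 2 := pow_le_pow_left₀ (norm_nonneg _) (g.norm_coe_le_norm x) 2
    rw [Real.norm_eq_abs, sq_abs] at hgx
    simp only [w, Complex.sq_norm, normSq_apply, ContinuousMap.add_apply,
      ContinuousMap.smul_apply, toComplex_apply, real_smul, smul_eq_mul, add_re, add_im, mul_re,
      mul_im, ofReal_re, ofReal_im, I_re, I_im]
    by_cases hx : g x ^ 2 < ε
    · have : (M * φ x) ^ 2 ≤ M ^ 2 := by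
        rw [mul_pow]
        exact mul_le_of_le_one_right (sq_nonneg M) (pow_le_one₀ (hφ x).1 (hφ x).2)
      nlinarith
    · simp only [hφ0 x hx]
      nlinarith
  have hwy : e w y = M + q * I := by
    apply Complex.ext <;> simp [w, hτ, hφ1, hre, q]
  have : M ^ 2 + q ^ 2 ≤ M ^ 2 + ε := calc
    M ^ 2 + q ^ 2 = ‖e w y‖ ^ 2 := by rw [hwy, Complex.sq_norm, normSq_apply]; simp [sq]
    _ ≤ ‖w‖ ^ 2 := by
      rw [← e.norm_map]
      exact pow_le_pow_left₀ (norm_nonneg _) ((e w).norm_coe_le_norm y) 2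
    _ ≤ M ^ 2 + ε := hw
  linarith

theorem LinearIsometry.map_I_smul_apply [CompletelyRegularSpace X] (e : C(X, ℂ) →ₗᵢ[ℝ] C(Y, ℂ))
    (he : e 1 = 1) {τ : Y → X} (hτ : ∀ g y, e (toComplex g) y = g (τ y)) (g : C(X, ℝ))
    (y : Y) : e (I • toComplex g) y = g (τ y) * e (const X I) y := by
  set c := g (τ y)
  have hdiff : I • toComplex (g - c • 1) = I • toComplex g - c • const X I := by
    ext x; simp [mul_sub, mul_comm]
  have him := e.im_map_I_smul_apply_eq_zero he hτ (g := g - c • 1) (y := y) (by simp [c])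
  have hre := e.re_map_apply_eq_zero he (f := I • toComplex (g - c • 1)) (by simp) y
  rw [hdiff, map_sub, LinearIsometry.map_smul] at him hre
  simp only [ContinuousMap.sub_apply, ContinuousMap.smul_apply, sub_re, sub_im, real_smul,
    re_ofReal_mul, im_ofReal_mul, sub_eq_zero] at him hre
  apply Complex.ext <;> simp [him, hre]

variable [CompletelyRegularSpace Y]

theorem LinearIsometryEquiv.map_const_I_apply (e : C(X, ℂ) ≃ₗᵢ[ℝ] C(Y, ℂ)) (he : e 1 = 1)
    (y : Y) : e (const X I) y = I ∨ e (const X I) y = -I := by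
  have hre : (e (const X I) y).re = 0 := e.toLinearIsometry.re_map_apply_eq_zero he (by simp) y
  have hnorm := e.norm_map_apply_eq_one (u := const X I) (by simp) y
  set z := e (const X I) y
  have him : z.im * z.im = 1 := by
    rw [Complex.norm_def, Real.sqrt_eq_one, normSq_apply, hre] at hnorm
    linarith
  rcases mul_self_eq_one_iff.mp him with h | h
  · exact .inl (Complex.ext hre h)
  · exact .inr (Complex.ext (by simpa using hre) (by simpa using h))

theorem LinearIsometryEquiv.im_map_apply_eq_zero (e : C(X, ℂ) ≃ₗᵢ[ℝ] C(Y, ℂ)) (he : e 1 = 1)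
    {f : C(X, ℂ)} (hf : ∀ x, (f x).im = 0) (y : Y) : (e f y).im = 0 := by
  have := e.toLinearIsometry.re_mul_conj_eq_zero (f := f) (w := const X I) (by simp)
    (by simp [hf]) (e.norm_map_apply_eq_one (u := const X I) (by simp) y)
  rcases e.map_const_I_apply he y with h | h <;> simpa [h] using this

noncomputable def LinearIsometryEquiv.restrictRealₗᵢ (e : C(X, ℂ) ≃ₗᵢ[ℝ] C(Y, ℂ))
    (he : e 1 = 1) : C(X, ℝ) →ₗᵢ[ℝ] C(Y, ℝ) where
  toLinearMap :=
    (reCLM.compLeftContinuous ℝ Y).toLinearMap ∘ₗ e.toLinearMap ∘ₗ toComplex.toLinearMap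
  norm_map' g := by
    have hreal := e.im_map_apply_eq_zero he (f := toComplex g) (by simp)
    calc _ = ⨆ y, ‖e (toComplex g) y‖ := by
          simp [norm_eq_iSup_norm, abs_re_eq_norm.mpr (hreal _)]
      _ = ‖g‖ := by
          simp [← norm_eq_iSup_norm, norm_eq_iSup_norm (toComplex g), norm_eq_iSup_norm g]

theorem LinearIsometryEquiv.toComplex_restrictRealₗᵢ (e : C(X, ℂ) ≃ₗᵢ[ℝ] C(Y, ℂ))
    (he : e 1 = 1) (g : C(X, ℝ)) : toComplex (e.restrictRealₗᵢ he g) = e (toComplex g) := by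
  ext y
  exact Complex.ext rfl (e.im_map_apply_eq_zero he (by simp) y).symm

variable [CompletelyRegularSpace X]

noncomputable def LinearIsometryEquiv.restrictReal (e : C(X, ℂ) ≃ₗᵢ[ℝ] C(Y, ℂ))
    (he : e 1 = 1) : C(X, ℝ) ≃ₗᵢ[ℝ] C(Y, ℝ) :=
  .ofSurjective (e.restrictRealₗᵢ he) fun k ↦
    ⟨e.symm.restrictRealₗᵢ (e.symm_apply_eq.mpr he.symm) k, toComplex_injective <| by
      rw [toComplex_restrictRealₗᵢ, toComplex_restrictRealₗᵢ, e.apply_symm_apply]⟩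

theorem LinearIsometryEquiv.toComplex_restrictReal (e : C(X, ℂ) ≃ₗᵢ[ℝ] C(Y, ℂ))
    (he : e 1 = 1) (g : C(X, ℝ)) : toComplex (e.restrictReal he g) = e (toComplex g) :=
  e.toComplex_restrictRealₗᵢ he g

theorem LinearIsometryEquiv.restrictReal_one (e : C(X, ℂ) ≃ₗᵢ[ℝ] C(Y, ℂ)) (he : e 1 = 1) :
    e.restrictReal he 1 = 1 :=
  toComplex_injective <| by
    rw [toComplex_restrictReal, show toComplex (1 : C(X, ℝ)) = 1 by ext; simp, he]
    ext; simp

end Complex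

section BanachStone
variable {X Y : Type*} [TopologicalSpace X] [CompactSpace X] [T2Space X] [TopologicalSpace Y]
  [CompactSpace Y] [T2Space Y]

theorem LinearIsometryEquiv.exists_homeomorph_apply_eq (e : C(X, ℂ) ≃ₗᵢ[ℝ] C(Y, ℂ))
    (he : e 1 = 1) :
    ∃ τ : Y ≃ₜ X, ∀ f y, e f y = (f (τ y)).re + (f (τ y)).im * e (const X I) y := by
  obtain ⟨τ, hτ⟩ := (e.restrictReal he).exists_homeomorph_of_map_one (e.restrictReal_one he)
  have hτ' (g : C(X, ℝ)) (y : Y) : e (toComplex g) y = g (τ y) := by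
    rw [← toComplex_restrictReal e he, toComplex_apply, hτ]
  have hI (g : C(X, ℝ)) (y : Y) : e (I • toComplex g) y = g (τ y) * e (const X I) y :=
    e.toLinearIsometry.map_I_smul_apply he hτ' g y
  refine ⟨τ, fun f y ↦ ?_⟩
  have hf : f = toComplex (reCLM.compLeftContinuous ℝ X f) +
      I • toComplex (imCLM.compLeftContinuous ℝ X f) := by
    ext x; simp [mul_comm I]
  conv_lhs => rw [hf, map_add, ContinuousMap.add_apply, hτ', hI]
  simp

end BanachStone

variable {X Y : Type*} [TopologicalSpace X] [CompactSpace X] [T2Space X]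
  [TopologicalSpace Y] [CompactSpace Y] [T2Space Y]

theorem stmt16 (S : C(X, ℂ) → C(Y, ℂ)) (hsurj : Function.Surjective S)
    (hadd : ∀ f g : C(X, ℂ), S (f + g) = S f + S g)
    (hsmul : ∀ (c : ℝ) (f : C(X, ℂ)), S (c • f) = c • S f)
    (hiso : ∀ f : C(X, ℂ), ‖S f‖ = ‖f‖)
    (hone : S 1 = 1) :
    ∃ (τ : Y ≃ₜ X) (K : Set Y), IsClopen K ∧
      ∀ (f : C(X, ℂ)) (y : Y),
        (y ∈ K → S f y = f (τ y)) ∧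
        (y ∉ K → S f y = star (f (τ y))) := by
  let e : C(X, ℂ) ≃ₗᵢ[ℝ] C(Y, ℂ) := .ofSurjective ⟨⟨⟨S, hadd⟩, hsmul⟩, hiso⟩ hsurj
  obtain ⟨τ, hτ⟩ := e.exists_homeomorph_apply_eq hone
  have hS : ∀ f y, S f y = (f (τ y)).re + (f (τ y)).im * S (const X I) y := hτ
  have hSI : ∀ y, S (const X I) y = I ∨ S (const X I) y = -I := e.map_const_I_apply hone
  have hK : {y | S (const X I) y = I}ᶜ = {y | S (const X I) y = -I} := by
    ext y
    refine ⟨(hSI y).resolve_left, fun h h' ↦ ?_⟩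
    norm_num [show S (const X I) y = I from h', Complex.ext_iff] at h
  refine ⟨τ, {y | S (const X I) y = I}, ⟨isClosed_eq (S _).continuous continuous_const,
    isClosed_compl_iff.mp (hK ▸ isClosed_eq (S _).continuous continuous_const)⟩,
    fun f y ↦ ⟨fun hy ↦ ?_, fun hy ↦ ?_⟩⟩
  · rw [hS, show S (const X I) y = I from hy]
    apply Complex.ext <;> simp
  · rw [hS, (hSI y).resolve_left hy]
    apply Complex.ext <;> simp
end

section
/- Let S : C(X,ℂ) → C(Y,ℂ) be an additive map with S(1) = 1, S(conj f) = conj(S f) for all f, and ‖S(fg)‖ = ‖S(f)S(g)‖ for all f, g, where S maps real-valued functions to real-valued functions. If g ∈ C(X,ℝ) (viewed in C(X,ℂ)) satisfies ‖S(g)‖ ≤ 1, then ‖1 − S(g²)‖ = ‖1 − S(g)²‖ ≤ 1, and hence S(g²)(y) ≥ 0 for all y ∈ Y. -/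
/-!
Since `1 - g² = (1 - g)(1 + g)` and `S` is additive and unital, `1 - S(g²) = S((1 - g)(1 + g))`,
whose norm is `‖S(1 - g) S(1 + g)‖ = ‖1 - S(g)²‖`. As `S g` is real-valued with values in `[-1, 1]`,
`1 - S(g)²` takes values in `[0, 1]`, so `‖1 - S(g²)‖ ≤ 1`, which forces `Re S(g²) ≥ 0` pointwise.
-/

variable {X Y : Type*} [TopologicalSpace X] [CompactSpace X] [T2Space X]
  [TopologicalSpace Y] [CompactSpace Y] [T2Space Y]

theorem norm_one_sub_map_sq_eq {R B : Type*} [Ring R] [Ring B] [Norm B] (S : R →+ B)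
    (hone : S 1 = 1) (hnm : ∀ f g, ‖S (f * g)‖ = ‖S f * S g‖) (g : R) :
    ‖1 - S (g ^ 2)‖ = ‖1 - S g ^ 2‖ := by
  have hfac : (1 : R) - g ^ 2 = (1 - g) * (1 + g) := by noncomm_ring
  rw [← hone, ← map_sub, hfac, hnm, map_sub, map_add, hone]
  congr 1
  noncomm_ring

theorem Complex.norm_one_sub_sq_le_one {z : ℂ} (hz : z.im = 0) (hle : ‖z‖ ≤ 1) :
    ‖1 - z ^ 2‖ ≤ 1 := by
  have hre : |z.re| ≤ 1 := (abs_re_le_norm z).trans hle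
  rw [← re_add_im z, hz, ofReal_zero, zero_mul, add_zero, ← ofReal_one, ← ofReal_pow,
    ← ofReal_sub, norm_real, Real.norm_eq_abs, abs_le]
  constructor <;> nlinarith [abs_le.mp hre, sq_nonneg z.re]

theorem Complex.re_nonneg_of_norm_one_sub_le_one {w : ℂ} (h : ‖1 - w‖ ≤ 1) : 0 ≤ w.re := by
  have := (abs_re_le_norm (1 - w)).trans h
  rw [sub_re, one_re, abs_le] at this
  linarith [this.2]

theorem ContinuousMap.norm_one_sub_sq_le_one {Z : Type*} [TopologicalSpace Z] [CompactSpace Z]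
    {h : C(Z, ℂ)} (hreal : ∀ z, (h z).im = 0) (hle : ‖h‖ ≤ 1) : ‖1 - h ^ 2‖ ≤ 1 :=
  (ContinuousMap.norm_le _ zero_le_one).mpr fun z =>
    Complex.norm_one_sub_sq_le_one (hreal z) ((h.norm_coe_le_norm z).trans hle)

theorem stmt17_general (S : C(X, ℂ) → C(Y, ℂ))
    (hadd : ∀ f g : C(X, ℂ), S (f + g) = S f + S g)
    (hone : S 1 = 1)
    (hnm : ∀ f g : C(X, ℂ), ‖S (f * g)‖ = ‖S f * S g‖)
    (hreal : ∀ f : C(X, ℂ), (∀ x, (f x).im = 0) → ∀ y, (S f y).im = 0) :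
    ∀ g : C(X, ℂ), (∀ x, (g x).im = 0) → ‖S g‖ ≤ 1 →
      ‖1 - S (g ^ 2)‖ = ‖1 - (S g) ^ 2‖ ∧ ‖1 - (S g) ^ 2‖ ≤ 1 ∧
      ∀ y, (S (g ^ 2) y).im = 0 ∧ 0 ≤ (S (g ^ 2) y).re := by
  intro g hg hgle
  have heq : ‖1 - S (g ^ 2)‖ = ‖1 - S g ^ 2‖ :=
    norm_one_sub_map_sq_eq (AddMonoidHom.mk' S hadd) hone hnm g
  have hle : ‖1 - S g ^ 2‖ ≤ 1 := ContinuousMap.norm_one_sub_sq_le_one (hreal g hg) hgle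
  have hg2 : ∀ x, ((g ^ 2) x).im = 0 := fun x => by simp [sq, hg x]
  refine ⟨heq, hle, fun y => ⟨hreal _ hg2 y, ?_⟩⟩
  apply Complex.re_nonneg_of_norm_one_sub_le_one
  simpa using ((1 - S (g ^ 2)).norm_coe_le_norm y).trans (heq.trans_le hle)

theorem stmt17 (S : C(X, ℂ) → C(Y, ℂ))
    (hadd : ∀ f g : C(X, ℂ), S (f + g) = S f + S g)
    (hone : S 1 = 1)
    (hstar : ∀ f : C(X, ℂ), S (star f) = star (S f))
    (hnm : ∀ f g : C(X, ℂ), ‖S (f * g)‖ = ‖S f * S g‖)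
    (hreal : ∀ f : C(X, ℂ), (∀ x, (f x).im = 0) → ∀ y, (S f y).im = 0) :
    ∀ g : C(X, ℂ), (∀ x, (g x).im = 0) → ‖S g‖ ≤ 1 →
      ‖1 - S (g ^ 2)‖ = ‖1 - (S g) ^ 2‖ ∧ ‖1 - (S g) ^ 2‖ ≤ 1 ∧
      ∀ y, (S (g ^ 2) y).im = 0 ∧ 0 ≤ (S (g ^ 2) y).re :=
  stmt17_general S hadd hone hnm hreal
end

section
/- Let τ : Y → X be a homeomorphism between compact Hausdorff spaces, K ⊆ Y a clopen set, and u : Y → ℝ a continuous function with values in {1, −1}. Define T : C(X,ℂ) → C(Y,ℂ) by T(f)(y) = u(y)f(τ(y)) if y ∈ K and T(f)(y) = u(y)·conj(f(τ(y))) if y ∉ K. Then T is a bijection satisfying ‖T(f+g)‖ = ‖T(f)+T(g)‖, ‖T(fg)‖ = ‖T(f)T(g)‖, and T(conj f) = conj(T f) for all f, g ∈ C(X,ℂ). -/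
variable {X Y : Type*} [TopologicalSpace X] [CompactSpace X] [T2Space X]
  [TopologicalSpace Y] [CompactSpace Y] [T2Space Y]

theorem stmt18 (τ : Y ≃ₜ X) (K : Set Y) (hK : IsClopen K)
    (u : C(Y, ℝ)) (hu : ∀ y, u y = 1 ∨ u y = -1)
    (T : C(X, ℂ) → C(Y, ℂ))
    (hT : ∀ (f : C(X, ℂ)) (y : Y),
      (y ∈ K → T f y = (u y : ℂ) * f (τ y)) ∧
      (y ∉ K → T f y = (u y : ℂ) * star (f (τ y)))) :
    Function.Bijective T ∧
    (∀ f g : C(X, ℂ), ‖T (f + g)‖ = ‖T f + T g‖) ∧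
    (∀ f g : C(X, ℂ), ‖T (f * g)‖ = ‖T f * T g‖) ∧
    (∀ f : C(X, ℂ), T (star f) = star (T f)) := by
  classical
  have hu2 : ∀ y, (u y : ℂ) * (u y : ℂ) = 1 := by
    intro y; rcases hu y with h | h <;> simp [h]
  have hstaru : ∀ y, star ((u y : ℂ)) = (u y : ℂ) := by
    intro y; simp [Complex.star_def, Complex.conj_ofReal]
  have habs : ∀ y, ‖(u y : ℂ)‖ = 1 := by
    intro y; rcases hu y with h | h <;> simp [h]
  have key : ∀ (f : C(X, ℂ)) (y : Y),
      T f y = if y ∈ K then (u y : ℂ) * f (τ y) else (u y : ℂ) * star (f (τ y)) := by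
    intro f y
    by_cases h : y ∈ K
    · simp [h, (hT f y).1 h]
    · simp [h, (hT f y).2 h]
  refine ⟨⟨?_, ?_⟩, ?_, ?_, ?_⟩
  · -- injective
    intro f g hfg
    ext x
    have h := ContinuousMap.congr_fun hfg (τ.symm x)
    rw [key, key] at h
    have hx : τ (τ.symm x) = x := τ.apply_symm_apply x
    by_cases hy : τ.symm x ∈ K
    · simp only [if_pos hy, hx] at h
      have := congrArg (fun z => (u (τ.symm x) : ℂ) * z) h
      simpa [← mul_assoc, hu2] using this
    · simp only [if_neg hy, hx] at h
      have := congrArg (fun z => (u (τ.symm x) : ℂ) * z) h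
      simp only [← mul_assoc, hu2, one_mul] at this
      exact star_injective this
  · -- surjective
    intro g
    have hclopen : IsClopen {x : X | τ.symm x ∈ K} := hK.preimage τ.symm.continuous
    have hcont : Continuous fun x : X =>
        if τ.symm x ∈ K then (u (τ.symm x) : ℂ) * g (τ.symm x)
        else (u (τ.symm x) : ℂ) * star (g (τ.symm x)) := by
      apply Continuous.if
      · intro a ha
        rw [hclopen.frontier_eq] at ha
        exact absurd ha (Set.notMem_empty a)
      · fun_prop
      · fun_prop
    refine ⟨⟨_, hcont⟩, ?_⟩
    ext y
    rw [key]
    have hy' : τ.symm (τ y) = y := τ.symm_apply_apply y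
    by_cases hy : y ∈ K
    · simp only [if_pos hy, ContinuousMap.coe_mk, hy', ← mul_assoc, hu2, one_mul]
    · simp only [if_neg hy, ContinuousMap.coe_mk, hy', star_mul, hstaru, star_star,
        ← mul_assoc]
      rw [mul_comm, ← mul_assoc, hu2, one_mul]
  · -- additive norm
    intro f g
    have : T (f + g) = T f + T g := by
      ext y
      rw [ContinuousMap.add_apply, key, key, key]
      by_cases hy : y ∈ K <;> simp [hy, mul_add, star_add]
    rw [this]
  · -- multiplicative norm
    intro f g
    rw [ContinuousMap.norm_eq_iSup_norm, ContinuousMap.norm_eq_iSup_norm]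
    congr 1
    funext y
    rw [ContinuousMap.mul_apply, key, key, key]
    have habsR : ∀ y, |u y| = 1 := by
      intro y; rcases hu y with h | h <;> simp [h]
    by_cases hy : y ∈ K <;>
      simp [hy, norm_mul, habs, habsR]
  · -- star
    intro f
    ext y
    rw [ContinuousMap.star_apply, key, key]
    by_cases hy : y ∈ K <;>
      simp [hy, star_mul, hstaru, mul_comm]
end
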